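/- arXiv:1008.2465 — 9 statements merged into one kernel-verified Lean document; each statement's English description precedes it below -/
import Mathlib

section
/- Let k be a field and consider the power series ring k[[x_1,...,x_n,z]] with maximal ideal m = (x_1,...,x_n,z). For any scalars a_1,...,a_n in k, letting I = (x_1 - a_1·z, ..., x_n - a_n·z), one has (z^2) + I·m = m^2. -/
open MvPowerSeries

/-! Every variable lies in `I + (z)`, so `m = I + (z)` with `I ⊆ m`. Hence
`m² = I·m + z·m = I·m + z·I + (z²)`, and `z·I ⊆ I·m`. -/

theorem Ideal.span_singleton_sq_sup_mul_eq_sq {R : Type*} [CommRing R] {I m : Ideal R} {z : R}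
    (hI : I ≤ m) (hz : z ∈ m) (hm : m ≤ I ⊔ Ideal.span {z}) :
    Ideal.span {z ^ 2} ⊔ I * m = m ^ 2 := by
  have hzm : Ideal.span {z} ≤ m := (Ideal.span_singleton_le_iff_mem m).mpr hz
  have hzz : Ideal.span {z} * Ideal.span {z} = Ideal.span {z ^ 2} := by
    rw [Ideal.span_singleton_mul_span_singleton, sq]
  apply le_antisymm
  · rw [sq m, ← hzz]
    exact sup_le (Ideal.mul_mono hzm hzm) (Ideal.mul_mono_left hI)
  · have hzm_le : Ideal.span {z} * m ≤ Ideal.span {z ^ 2} ⊔ I * m :=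
      calc Ideal.span {z} * m ≤ Ideal.span {z} * (I ⊔ Ideal.span {z}) := Ideal.mul_mono_right hm
        _ = I * Ideal.span {z} ⊔ Ideal.span {z ^ 2} := by rw [Ideal.mul_sup, hzz, mul_comm]
        _ ≤ Ideal.span {z ^ 2} ⊔ I * m :=
          sup_le (le_sup_of_le_right (Ideal.mul_mono_right hzm)) le_sup_left
    calc m ^ 2 = m * m := sq m
      _ ≤ (I ⊔ Ideal.span {z}) * m := Ideal.mul_mono_left hm
      _ = I * m ⊔ Ideal.span {z} * m := Ideal.sup_mul _ _ _
      _ ≤ Ideal.span {z ^ 2} ⊔ I * m := sup_le le_sup_right hzm_le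

/-- Let `k` be a field, `S = k[[x_1,…,x_n,z]]` (variables indexed by
`Option (Fin n)`, with `X none` playing the role of `z` and `X (some i)` that of `x_i`),
and `m` its maximal ideal, generated by the variables.  For any scalars `a_1,…,a_n ∈ k`,
with `I = (x_1 - a_1 z, …, x_n - a_n z)`, one has `(z²) + I·m = m²`. -/
theorem span_zsq_add_I_mul_m_eq_m_sq
    (k : Type) [Field k] (n : ℕ) (a : Fin n → k) :
    let S := MvPowerSeries (Option (Fin n)) k
    let z : S := MvPowerSeries.X none
    let m : Ideal S := Ideal.span (Set.range (MvPowerSeries.X : Option (Fin n) → S))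
    let I : Ideal S := Ideal.span
      (Set.range fun i : Fin n =>
        MvPowerSeries.X (some i) - MvPowerSeries.C (σ := Option (Fin n)) (R := k) (a i) * z)
    Ideal.span {z ^ 2} + I * m = m ^ 2 := by
  intro S z m I
  have hX : ∀ u, (X u : S) ∈ m := fun u => Ideal.subset_span ⟨u, rfl⟩
  have hIgen : ∀ i, (X (some i) - C (a i) * z : S) ∈ I := fun i => Ideal.subset_span ⟨i, rfl⟩
  have hI : I ≤ m := Ideal.span_le.mpr <| by
    rintro _ ⟨i, rfl⟩
    exact m.sub_mem (hX _) (m.mul_mem_left _ (hX none))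
  have hm : m ≤ I ⊔ Ideal.span {z} := Ideal.span_le.mpr <| by
    rintro _ ⟨_ | i, rfl⟩
    · exact Ideal.mem_sup_right (Ideal.mem_span_singleton_self z)
    · rw [← sub_add_cancel (X (some i) : S) (C (a i) * z)]
      exact Ideal.add_mem _ (Ideal.mem_sup_left (hIgen i))
        (Ideal.mem_sup_right (Ideal.mul_mem_left _ _ (Ideal.mem_span_singleton_self z)))
  exact Ideal.span_singleton_sq_sup_mul_eq_sq hI (hX none) hm
end

section
/- Let k be a field and f ∈ k[[x_1,...,x_n,z]] a power series of order at least 4 (i.e., f ∈ m^4 where m = (x_1,...,x_n,z)). Then for any scalars a_1,...,a_n ∈ k, f can be written as f = z^2·h + (x_1 - a_1·z)·g_1 + ... + (x_n - a_n·z)·g_n where each g_i ∈ m^3 and h ∈ m^2. -/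
/-!
Replace the generators `x_i` of `m` by `y_i = x_i - a_i z`; together with `z` they still
generate `m`. Writing `f ∈ m⁴ = m³ · (z, y)` gives `f = z c + ∑ y_i c_i` with `c, c_i ∈ m³`,
and writing `c ∈ m · m²` again gives `c = z h + ∑ y_i d_i` with `h, d_i ∈ m²`. Hence
`f = z² h + ∑ y_i (c_i + z d_i)`.
-/

open MvPowerSeries

namespace Ideal

variable {R ι : Type*} [CommRing R]

theorem exists_sum_mul_of_mem_span_range_pow_succ [Fintype ι] (y : ι → R) {j : ℕ} {f : R}
    (hf : f ∈ span (Set.range y) ^ (j + 1)) :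
    ∃ c : ι → R, (∀ i, c i ∈ span (Set.range y) ^ j) ∧ f = ∑ i, y i * c i := by
  classical
  rw [pow_succ, ← smul_eq_mul] at hf
  obtain ⟨c, hc, rfl⟩ := (Submodule.mem_ideal_smul_span_iff_exists_sum _ y f).mp hf
  refine ⟨c, hc, ?_⟩
  rw [Finsupp.sum_fintype _ _ (by simp)]
  simp only [smul_eq_mul, mul_comm]

theorem span_range_sub_mul_none (x : Option ι → R) (a : ι → R) :
    span (Set.range fun o : Option ι => o.elim (x none) fun i => x (some i) - a i * x none) =
      span (Set.range x) := by
  set y : Option ι → R := fun o : Option ι => o.elim (x none) fun i => x (some i) - a i * x none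
  have hx : ∀ o, x o ∈ span (Set.range x) := fun o => subset_span ⟨o, rfl⟩
  have hy : ∀ o, y o ∈ span (Set.range y) := fun o => subset_span ⟨o, rfl⟩
  apply le_antisymm <;> rw [span_le] <;> rintro _ ⟨(_ | i), rfl⟩
  · exact hx none
  · exact sub_mem (hx (some i)) (mul_mem_left _ _ (hx none))
  · exact hy none
  · have hxy : x (some i) = y (some i) + a i * y none := by simp [y]
    rw [hxy]
    exact add_mem (hy (some i)) (mul_mem_left _ _ (hy none))

theorem exists_sq_mul_add_sum_mul_of_mem_span_range_pow [Fintype ι] (y : Option ι → R) {j : ℕ}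
    {f : R} (hf : f ∈ span (Set.range y) ^ (j + 2)) :
    ∃ (h : R) (g : ι → R), h ∈ span (Set.range y) ^ j ∧
      (∀ i, g i ∈ span (Set.range y) ^ (j + 1)) ∧
      f = y none ^ 2 * h + ∑ i, y (some i) * g i := by
  set I := span (Set.range y)
  obtain ⟨c, hc, rfl⟩ := exists_sum_mul_of_mem_span_range_pow_succ y hf
  obtain ⟨d, hd, hcd⟩ := exists_sum_mul_of_mem_span_range_pow_succ y (hc none)
  have hz : y none ∈ I := subset_span ⟨none, rfl⟩
  refine ⟨d none, fun i => c (some i) + y none * d (some i), hd none, fun i => ?_, ?_⟩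
  · refine add_mem (hc (some i)) ?_
    rw [pow_succ']
    exact mul_mem_mul hz (hd (some i))
  · rw [Fintype.sum_option, hcd, Fintype.sum_option]
    simp only [mul_add, Finset.sum_add_distrib, Finset.mul_sum]
    ring_nf

end Ideal

/-- Lemma 2.3 of the paper.  Let `k` be a field and
`f ∈ k[[x_1,…,x_n,z]]` a power series of order at least `4`, i.e. `f ∈ m⁴` where
`m = (x_1,…,x_n,z)` (variables indexed by `Option (Fin n)`, `X none = z`).
Then for any scalars `a_1,…,a_n ∈ k` one can write
`f = z²·h + ∑ᵢ (xᵢ - aᵢ·z)·gᵢ` with each `gᵢ ∈ m³` and `h ∈ m²`. -/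
theorem order_ge_four_decomposition
    (k : Type) [Field k] (n : ℕ) (a : Fin n → k)
    (f : MvPowerSeries (Option (Fin n)) k)
    (m : Ideal (MvPowerSeries (Option (Fin n)) k))
    (hm : m = Ideal.span
      (Set.range (MvPowerSeries.X : Option (Fin n) → MvPowerSeries (Option (Fin n)) k)))
    (hf : f ∈ m ^ 4) :
    ∃ (h : MvPowerSeries (Option (Fin n)) k) (g : Fin n → MvPowerSeries (Option (Fin n)) k),
      h ∈ m ^ 2 ∧ (∀ i, g i ∈ m ^ 3) ∧
      f = (MvPowerSeries.X none) ^ 2 * h +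
        ∑ i : Fin n,
          (MvPowerSeries.X (some i)
            - (MvPowerSeries.C (a i) : MvPowerSeries (Option (Fin n)) k) * MvPowerSeries.X none) * g i := by
  rw [hm, ← Ideal.span_range_sub_mul_none X (fun i => C (a i))] at hf ⊢
  exact Ideal.exists_sq_mul_add_sum_mul_of_mem_span_range_pow _ hf
end

section
/- Let S be a commutative ring, f ∈ S, and (φ, ψ) a pair of n×n matrices over S with φψ = ψφ = f·I_n (a matrix factorization of f). Then in S[[u,v]], the pair of 2n×2n block matrices Φ = [[φ, -v·I],[u·I, ψ]] and Ψ = [[ψ, v·I],[-u·I, φ]] satisfies ΦΨ = ΨΦ = (f + uv)·I_{2n}. -/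
/-!
The off-diagonal blocks are scalar matrices, hence central, so in either block product the
off-diagonal blocks cancel and each diagonal block is `φψ` or `ψφ`, i.e. `f`, plus `uv`.
-/

open MvPowerSeries Matrix

namespace Matrix

variable {n R S : Type*} [Fintype n] [DecidableEq n]

def IsFactorization [CommRing R] (A B : Matrix n n R) (c : R) : Prop :=
  A * B = c • 1 ∧ B * A = c • 1

namespace IsFactorization

theorem map [CommRing R] [CommRing S] {A B : Matrix n n R} {c : R}
    (h : IsFactorization A B c) (g : R →+* S) :
    IsFactorization (A.map g) (B.map g) (g c) := by
  have hc : (c • 1 : Matrix n n R).map g = g c • 1 := by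
    rw [map_smul' _ _ _ (map_mul g), Matrix.map_one _ (map_zero g) (map_one g)]
  exact ⟨by rw [← Matrix.map_mul, h.1, hc], by rw [← Matrix.map_mul, h.2, hc]⟩

theorem fromBlocks [CommRing R] {A B : Matrix n n R} {c : R}
    (h : IsFactorization A B c) (a b : R) :
    IsFactorization (fromBlocks A (a • 1) (b • 1) B) (fromBlocks B (-(a • 1)) (-(b • 1)) A)
      (c - a * b) := by
  constructor <;>
  · rw [fromBlocks_multiply, ← fromBlocks_one, fromBlocks_smul]
    simp [h.1, h.2, smul_smul, mul_comm a b, sub_eq_add_neg, add_comm, add_smul]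

end IsFactorization

end Matrix

/-- Knörrer-type doubling, Remark 2.1 of the paper.
Let `S` be a commutative ring, `f ∈ S`, and `(φ, ψ)` an `N × N` matrix factorization of
`f`, i.e. `φψ = ψφ = f·1`.  In `T = S[[u,v]]` (with `u = X 0`, `v = X 1`), the block
matrices `Φ = [[φ, -v·1],[u·1, ψ]]` and `Ψ = [[ψ, v·1],[-u·1, φ]]` satisfy
`ΦΨ = ΨΦ = (f + uv)·1`. -/
theorem knorrer_doubling
    (S : Type) [CommRing S] (f : S) (N : ℕ)
    (φ ψ : Matrix (Fin N) (Fin N) S)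
    (hφψ : φ * ψ = f • (1 : Matrix (Fin N) (Fin N) S))
    (hψφ : ψ * φ = f • (1 : Matrix (Fin N) (Fin N) S)) :
    let T := MvPowerSeries (Fin 2) S
    let u : T := MvPowerSeries.X 0
    let v : T := MvPowerSeries.X 1
    let ι : Matrix (Fin N) (Fin N) S → Matrix (Fin N) (Fin N) T :=
      fun M => M.map ((MvPowerSeries.C : S →+* MvPowerSeries (Fin 2) S))
    let Φ : Matrix (Fin N ⊕ Fin N) (Fin N ⊕ Fin N) T :=
      Matrix.fromBlocks (ι φ) (-(v • 1)) (u • 1) (ι ψ)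
    let Ψ : Matrix (Fin N ⊕ Fin N) (Fin N ⊕ Fin N) T :=
      Matrix.fromBlocks (ι ψ) (v • 1) (-(u • 1)) (ι φ)
    Φ * Ψ = ((MvPowerSeries.C : S →+* MvPowerSeries (Fin 2) S) f + u * v) • 1 ∧
      Ψ * Φ = ((MvPowerSeries.C : S →+* MvPowerSeries (Fin 2) S) f + u * v) • 1 := by
  intro T u v ι Φ Ψ
  have hΦΨ := (IsFactorization.map ⟨hφψ, hψφ⟩ C).fromBlocks (-v) u
  simpa only [IsFactorization, neg_smul, neg_neg, sub_eq_add_neg, neg_mul, mul_comm v u] using hΦΨ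
end

section
/- Let k be a field, f ∈ k[[x_1,...,x_n,z]] with f = z^2·h + Σ_i (x_i - a_i z)·g_i for power series g_i, h involving parameters a_1,...,a_n. Given pairwise commuting m×m matrices A_1,...,A_n over k, define inflated matrices by substituting A_i for a_i, x_i·I_m for x_i, z·I_m for z, and α·I_m for scalars α, in the inductively defined matrix factorization (φ_0,ψ_0)=([z^2],[h]), (φ_i,ψ_i)=([[φ_{i-1}, -g_i I],[(x_i - a_i z)I, ψ_{i-1}]], [[ψ_{i-1}, g_i I],[(-x_i + a_i z)I, φ_{i-1}]]). Then the resulting pair (Φ_n, Ψ_n) of (m·2^n)×(m·2^n) matrices satisfies Φ_n Ψ_n = Ψ_n Φ_n = f · I_{m·2^n}. -/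
/-! Knörrer's doubling turns a matrix factorization `φ ψ = ψ φ = s` into one of `s + a b` by
adjoining the factorization `a · b` of a single product in block form, so `knorrerPair u v n`
factors `∑_{j ≤ n} u_j v_j`; for the data of the theorem this sum is `f`. Inflation is
multiplicative, being entrywise the ring homomorphism `R[[x]] → Matₘ(k[[x]])` induced by `ρ`
followed by flattening of block matrices, and it sends the scalar `f` to `f · 1`. -/

open Matrix MvPowerSeries

/-- The Knörrer-style inductively defined pair of `2^i × 2^i` matrices attached to two
sequences `u v : ℕ → S`: start with `([u 0], [v 0])` and at each step form
`([[φ, -v·1],[u·1, ψ]], [[ψ, v·1],[-u·1, φ]])`. -/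
def knorrerPair {S : Type} [CommRing S] (u v : ℕ → S) :
    (i : ℕ) → Matrix (Fin (2 ^ i)) (Fin (2 ^ i)) S × Matrix (Fin (2 ^ i)) (Fin (2 ^ i)) S
  | 0 => (Matrix.of fun _ _ => u 0, Matrix.of fun _ _ => v 0)
  | (i + 1) =>
    let p := knorrerPair u v i
    let e : Fin (2 ^ i) ⊕ Fin (2 ^ i) ≃ Fin (2 ^ (i + 1)) :=
      finSumFinEquiv.trans (finCongr (by rw [pow_succ, mul_two]))
    ((Matrix.reindex e e)
        (Matrix.fromBlocks p.1 ((-(v (i + 1))) • 1) ((u (i + 1)) • 1) p.2),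
     (Matrix.reindex e e)
        (Matrix.fromBlocks p.2 ((v (i + 1)) • 1) ((-(u (i + 1))) • 1) p.1))

/-- *Inflation*: given a ring homomorphism `ρ` from a commutative ring `R` into `m × m`
matrices over `k` (the image of a tuple of pairwise commuting matrices), a matrix with
entries in `R[[x's]]` is turned into a matrix of size `m` times bigger with entries in
`k[[x's]]`, by applying `ρ` to every coefficient of every entry. -/
noncomputable def inflate {k R : Type} [Field k] [CommRing R] {m : ℕ} {σ : Type}
    (ρ : R →+* Matrix (Fin m) (Fin m) k) {N : Type}
    (M : Matrix N N (MvPowerSeries σ R)) :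
    Matrix (N × Fin m) (N × Fin m) (MvPowerSeries σ k) :=
  Matrix.of fun p q =>
    (fun d => ρ (MvPowerSeries.coeff (R := R) d (M p.1 q.1)) p.2 q.2 : MvPowerSeries σ k)

def IsMatrixFactorization {ι S : Type} [Fintype ι] [DecidableEq ι] [CommRing S]
    (φ ψ : Matrix ι ι S) (s : S) : Prop :=
  φ * ψ = s • 1 ∧ ψ * φ = s • 1

section KnorrerStep

variable {ι S : Type} [Fintype ι] [DecidableEq ι] [CommRing S]

theorem fromBlocks_mul_fromBlocks_of_mul_eq_smul_one {φ ψ : Matrix ι ι S} {s : S}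
    (hφψ : φ * ψ = s • 1) (hψφ : ψ * φ = s • 1) (a b : S) :
    fromBlocks φ ((-b) • 1) (a • 1) ψ * fromBlocks ψ (b • 1) ((-a) • 1) φ =
      (s + a * b) • 1 := by
  rw [fromBlocks_multiply, hφψ, hψφ, ← fromBlocks_one, fromBlocks_smul]
  congr 1 <;> simp [smul_smul, add_smul, mul_comm, add_comm]

namespace IsMatrixFactorization

theorem fromBlocks {φ ψ : Matrix ι ι S} {s : S} (hs : IsMatrixFactorization φ ψ s) (a b : S) :
    IsMatrixFactorization (fromBlocks φ ((-b) • 1) (a • 1) ψ)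
      (fromBlocks ψ (b • 1) ((-a) • 1) φ) (s + a * b) := by
  refine ⟨fromBlocks_mul_fromBlocks_of_mul_eq_smul_one hs.1 hs.2 a b, ?_⟩
  simpa only [neg_neg, neg_mul_neg] using
    fromBlocks_mul_fromBlocks_of_mul_eq_smul_one hs.2 hs.1 (-a) (-b)

theorem reindex {κ : Type} [Fintype κ] [DecidableEq κ] {φ ψ : Matrix ι ι S} {s : S}
    (hs : IsMatrixFactorization φ ψ s) (e : ι ≃ κ) :
    IsMatrixFactorization (Matrix.reindex e e φ) (Matrix.reindex e e ψ) s := by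
  simp only [IsMatrixFactorization, ← coe_reindexRingEquiv, ← map_mul, hs.1, hs.2]
  simp [reindex_apply, submatrix_smul, submatrix_one_equiv]

end IsMatrixFactorization

end KnorrerStep

theorem knorrerPair_isMatrixFactorization {S : Type} [CommRing S] (u v : ℕ → S) (n : ℕ) :
    IsMatrixFactorization (knorrerPair u v n).1 (knorrerPair u v n).2
      (∑ j ∈ Finset.range (n + 1), u j * v j) := by
  induction n with
  | zero =>
    constructor <;> ext i j <;>
      simp [knorrerPair, Matrix.mul_apply, Fin.fin_one_eq_zero, mul_comm]
  | succ n ih =>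
    rw [Finset.sum_range_succ]
    exact (ih.fromBlocks _ _).reindex _

def inflateHom {k R σ : Type} [Semiring k] [Semiring R] {m : ℕ}
    (ρ : R →+* Matrix (Fin m) (Fin m) k) :
    MvPowerSeries σ R →+* Matrix (Fin m) (Fin m) (MvPowerSeries σ k) where
  toFun s := Matrix.of fun i j d => ρ (coeff d s) i j
  map_one' := by
    classical
    ext i j d
    show ρ (coeff d 1) i j = coeff d ((1 : Matrix _ _ _) i j)
    by_cases hij : i = j <;> by_cases hd : d = 0 <;> simp [coeff_one, Matrix.one_apply, hij, hd]
  map_mul' s t := by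
    classical
    ext i j d
    change ρ (coeff d (s * t)) i j = _
    simp only [Matrix.mul_apply, coeff_mul, map_sum, Matrix.sum_apply, _root_.map_mul]
    exact Finset.sum_comm
  map_zero' := by
    ext i j d
    show ρ (coeff d 0) i j = 0
    simp
  map_add' s t := by
    ext i j d
    show ρ (coeff d (s + t)) i j = ρ (coeff d s) i j + ρ (coeff d t) i j
    simp

section Inflate

variable {k R σ N : Type} [Field k] [CommRing R] {m : ℕ}

theorem inflate_eq_compRingEquiv [Fintype N] [DecidableEq N]
    (ρ : R →+* Matrix (Fin m) (Fin m) k) (M : Matrix N N (MvPowerSeries σ R)) :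
    inflate ρ M = compRingEquiv N (Fin m) _ ((inflateHom ρ).mapMatrix M) :=
  rfl

theorem inflate_mul [Fintype N] [DecidableEq N] (ρ : R →+* Matrix (Fin m) (Fin m) k)
    (M M' : Matrix N N (MvPowerSeries σ R)) :
    inflate ρ (M * M') = inflate ρ M * inflate ρ M' := by
  simp only [inflate_eq_compRingEquiv, _root_.map_mul]

theorem inflate_map_algebraMap_smul_one [DecidableEq N] [Algebra k R]
    (ρ : R →ₐ[k] Matrix (Fin m) (Fin m) k) (f : MvPowerSeries σ k) :
    inflate ρ.toRingHom (map (algebraMap k R) f • (1 : Matrix N N (MvPowerSeries σ R))) =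
      f • 1 := by
  ext ⟨p, i⟩ ⟨q, j⟩ d
  change ρ (coeff d ((map (algebraMap k R) f • (1 : Matrix N N _)) p q)) i j = _
  by_cases hpq : p = q <;> by_cases hij : i = j <;>
    simp [hpq, hij, coeff_map, Matrix.algebraMap_matrix_apply]

theorem IsMatrixFactorization.inflate [Fintype N] [DecidableEq N] [Algebra k R]
    {φ ψ : Matrix N N (MvPowerSeries σ R)} {f : MvPowerSeries σ k}
    (hs : IsMatrixFactorization φ ψ (map (algebraMap k R) f))
    (ρ : R →ₐ[k] Matrix (Fin m) (Fin m) k) :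
    IsMatrixFactorization (inflate ρ.toRingHom φ) (inflate ρ.toRingHom ψ) f := by
  constructor <;> rw [← inflate_mul]
  · rw [hs.1, inflate_map_algebraMap_smul_one]
  · rw [hs.2, inflate_map_algebraMap_smul_one]

end Inflate

/-- Let `f ∈ k[[x_1,…,x_n,z]]` be written (with parameters
`a_1,…,a_n`) as `f = z²·h + ∑ᵢ (xᵢ - aᵢ z)·gᵢ`.  The parameters, together with the
pairwise commuting `m × m` matrices `A_i` substituted for them, are encoded by a
commutative `k`-algebra `R` and an algebra map `ρ : R → Matₘ(k)` with `A_i = ρ(aᵢ)`;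
`h, gᵢ` are power series with coefficients in `R`.  Inflating the inductively defined
matrix factorization `(φ_0,ψ_0) = ([z²],[h])`,
`(φ_i,ψ_i) = ([[φ_{i-1}, -gᵢ·1],[(xᵢ-aᵢz)·1, ψ_{i-1}]], [[ψ_{i-1}, gᵢ·1],[(-xᵢ+aᵢz)·1, φ_{i-1}]])`
yields a pair `(Φ_n, Ψ_n)` of `m·2ⁿ × m·2ⁿ` matrices over `k[[x_1,…,x_n,z]]` with
`Φ_n Ψ_n = Ψ_n Φ_n = f · 1`. -/
theorem inflated_knorrerPair_is_matrix_factorization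
    (k : Type) [Field k] (n m : ℕ)
    (R : Type) [CommRing R] [Algebra k R]
    (ρ : R →ₐ[k] Matrix (Fin m) (Fin m) k)
    (a : Fin n → R)
    (f : MvPowerSeries (Option (Fin n)) k)
    (h : MvPowerSeries (Option (Fin n)) R)
    (g : Fin n → MvPowerSeries (Option (Fin n)) R)
    (hf : MvPowerSeries.map (σ := Option (Fin n)) (algebraMap k R) f
        = (MvPowerSeries.X none) ^ 2 * h +
          ∑ i : Fin n,
            (MvPowerSeries.X (some i)
              - MvPowerSeries.C (σ := Option (Fin n)) (R := R) (a i) * MvPowerSeries.X none) * g i) :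
    let u : ℕ → MvPowerSeries (Option (Fin n)) R := fun j =>
      match j with
      | 0 => (MvPowerSeries.X none) ^ 2
      | j + 1 => if hj : j < n then
          MvPowerSeries.X (some ⟨j, hj⟩)
            - MvPowerSeries.C (σ := Option (Fin n)) (R := R) (a ⟨j, hj⟩) * MvPowerSeries.X none
        else 0
    let v : ℕ → MvPowerSeries (Option (Fin n)) R := fun j =>
      match j with
      | 0 => h
      | j + 1 => if hj : j < n then g ⟨j, hj⟩ else 0
    let P := knorrerPair u v n
    inflate ρ.toRingHom P.1 * inflate ρ.toRingHom P.2 = f • 1 ∧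
      inflate ρ.toRingHom P.2 * inflate ρ.toRingHom P.1 = f • 1 := by
  intro u v P
  have hf_sum : map (algebraMap k R) f = ∑ j ∈ Finset.range (n + 1), u j * v j := by
    rw [hf, Finset.sum_range_succ', add_comm, ← Fin.sum_univ_eq_sum_range]
    simp [u, v]
  exact (hf_sum ▸ knorrerPair_isMatrixFactorization u v n).inflate ρ
end

section
/- Let k be an infinite field and V, V' finite-dimensional modules over the free algebra k⟨x_1,...,x_m⟩, with the action of x_i on V given by X_i ∈ End_k(V) and on V' by X_i'. Fix m distinct scalars c_1,...,c_m ∈ k and define k⟨a,b⟩-module structures on V^m and (V')^m where a acts by the block diagonal matrix diag(c_1 id, ..., c_m id) and b acts by the block matrix with X_1,...,X_m on the diagonal and identity blocks on the subdiagonal (and the analogous operators A', B' on (V')^m). If S: V^m → (V')^m is k-linear with SA = A'S and SB = B'S, then S = diag(σ,...,σ) for a single map σ: V → V' satisfying σX_i = X_i'σ for all i. -/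
/-!
Since the `c_i` are distinct, `SA = A'S` forces `S` to be block diagonal,
`S = diag(σ_1, …, σ_m)`. Comparing blocks in `SB = B'S`, the diagonal blocks give
`σ_i X_i = X_i' σ_i`, and the identity blocks on the subdiagonal give `σ_{i+1} = σ_i`,
so all `σ_i` agree.
-/

open Matrix

namespace Matrix

variable {ι κ α β γ R : Type*}

def block (M : Matrix (ι × α) (κ × β) R) (i : ι) (j : κ) : Matrix α β R :=
  of fun a b => M (i, a) (j, b)

@[simp]
theorem block_apply (M : Matrix (ι × α) (κ × β) R) (i : ι) (j : κ) (a : α) (b : β) :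
    M.block i j a b = M (i, a) (j, b) :=
  rfl

def IsBlockDiag [Zero R] (S : Matrix (ι × α) (ι × β) R) : Prop :=
  ∀ p q, p.1 ≠ q.1 → S p q = 0

theorem apply_eq_zero_of_mul_diagonal_eq_diagonal_mul [CommRing R] [NoZeroDivisors R]
    [Fintype ι] [DecidableEq ι] [Fintype κ] [DecidableEq κ]
    {S : Matrix ι κ R} {d : κ → R} {d' : ι → R} (h : S * diagonal d = diagonal d' * S)
    {i : ι} {j : κ} (hij : d' i ≠ d j) : S i j = 0 := by
  have hentry := congr_fun₂ h i j
  rw [mul_diagonal, diagonal_mul, mul_comm, ← sub_eq_zero, ← sub_mul] at hentry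
  exact (mul_eq_zero.1 hentry).resolve_left (sub_ne_zero.2 hij.symm)

theorem diagonal_comp_fst [DecidableEq ι] [DecidableEq α] [Zero R] (c : ι → R) :
    diagonal (fun p : ι × α => c p.1) =
      of fun p q => if p.1 = q.1 ∧ p.2 = q.2 then c p.1 else 0 := by
  ext p q
  simp [diagonal_apply, Prod.ext_iff]

def blockLowerBidiagonal {m : ℕ} [DecidableEq α] [Zero R] [One R]
    (X : Fin m → Matrix α α R) : Matrix (Fin m × α) (Fin m × α) R :=
  of fun p q => if p.1 = q.1 then X p.1 p.2 q.2
    else if (p.1 : ℕ) = (q.1 : ℕ) + 1 then (if p.2 = q.2 then 1 else 0) else 0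

@[simp]
theorem blockLowerBidiagonal_block_self {m : ℕ} [DecidableEq α] [Zero R] [One R]
    (X : Fin m → Matrix α α R) (i : Fin m) : (blockLowerBidiagonal X).block i i = X i := by
  ext a b
  simp [blockLowerBidiagonal]

@[simp]
theorem blockLowerBidiagonal_block_succ_castSucc {n : ℕ} [DecidableEq α] [Zero R] [One R]
    (X : Fin (n + 1) → Matrix α α R) (i : Fin n) :
    (blockLowerBidiagonal X).block i.succ i.castSucc = 1 := by
  ext a b
  simp [blockLowerBidiagonal, Fin.castSucc_lt_succ.ne', one_apply]

variable [Fintype ι] [NonUnitalNonAssocSemiring R]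

theorem IsBlockDiag.block_mul [Fintype α] {S : Matrix (ι × γ) (ι × α) R}
    (hS : S.IsBlockDiag) (M : Matrix (ι × α) (κ × β) R) (i : ι) (j : κ) :
    (S * M).block i j = S.block i i * M.block i j := by
  ext c b
  rw [block_apply, mul_apply, Fintype.sum_prod_type, Finset.sum_eq_single i]
  · rfl
  · intro r _ hr
    exact Finset.sum_eq_zero fun a _ => by rw [hS _ _ hr.symm, zero_mul]
  · simp

theorem IsBlockDiag.mul_block [Fintype α] {S : Matrix (ι × α) (ι × β) R}
    (hS : S.IsBlockDiag) (M : Matrix (κ × γ) (ι × α) R) (i : κ) (j : ι) :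
    (M * S).block i j = M.block i j * S.block j j := by
  ext c b
  rw [block_apply, mul_apply, Fintype.sum_prod_type, Finset.sum_eq_single j]
  · rfl
  · intro r _ hr
    exact Finset.sum_eq_zero fun a _ => by rw [hS _ _ hr, mul_zero]
  · simp

end Matrix

theorem Fin.apply_eq_apply_zero_of_succ {α : Type*} {n : ℕ} {f : Fin (n + 1) → α}
    (h : ∀ i : Fin n, f i.succ = f i.castSucc) (i : Fin (n + 1)) : f i = f 0 :=
  Fin.induction (motive := fun i => f i = f 0) rfl (fun i ih => (h i).trans ih) i

/-- Example 2.3 of the paper, Gelfand–Ponomarev.  Let `k` be a field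
with `m` distinct scalars `c_1,…,c_m`, and let `V = k^{nV}`, `V' = k^{nV'}` carry
`k⟨x_1,…,x_m⟩`-module structures via operators `X_i`, `X_i'`.  Put on `V^m`, `(V')^m`
the `k⟨a,b⟩`-module structures where `a` acts by `A = diag(c_1·1,…,c_m·1)` and `b` acts
by the block matrix `B` with `X_1,…,X_m` on the diagonal and identity blocks on the
subdiagonal (resp. `A'`, `B'`).  If `S : V^m → (V')^m` is `k`-linear with `SA = A'S`
and `SB = B'S`, then `S = diag(σ,…,σ)` for a single map `σ : V → V'` satisfying
`σX_i = X_i'σ` for all `i`. -/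
theorem gelfand_ponomarev_intertwiner
    (k : Type) [Field k] (m nV nV' : ℕ)
    (c : Fin m → k) (hc : Function.Injective c)
    (X : Fin m → Matrix (Fin nV) (Fin nV) k)
    (X' : Fin m → Matrix (Fin nV') (Fin nV') k)
    (A : Matrix (Fin m × Fin nV) (Fin m × Fin nV) k)
    (hA : A = Matrix.of fun p q => if p.1 = q.1 ∧ p.2 = q.2 then c p.1 else 0)
    (A' : Matrix (Fin m × Fin nV') (Fin m × Fin nV') k)
    (hA' : A' = Matrix.of fun p q => if p.1 = q.1 ∧ p.2 = q.2 then c p.1 else 0)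
    (B : Matrix (Fin m × Fin nV) (Fin m × Fin nV) k)
    (hB : B = Matrix.of fun p q =>
      if p.1 = q.1 then X p.1 p.2 q.2
      else if (p.1 : ℕ) = (q.1 : ℕ) + 1 then (if p.2 = q.2 then 1 else 0) else 0)
    (B' : Matrix (Fin m × Fin nV') (Fin m × Fin nV') k)
    (hB' : B' = Matrix.of fun p q =>
      if p.1 = q.1 then X' p.1 p.2 q.2
      else if (p.1 : ℕ) = (q.1 : ℕ) + 1 then (if p.2 = q.2 then 1 else 0) else 0)
    (S : Matrix (Fin m × Fin nV') (Fin m × Fin nV) k)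
    (hSA : S * A = A' * S) (hSB : S * B = B' * S) :
    ∃ σ : Matrix (Fin nV') (Fin nV) k,
      (∀ p q, S p q = if p.1 = q.1 then σ p.2 q.2 else 0) ∧
      ∀ i, σ * X i = X' i * σ := by
  have hS : S.IsBlockDiag := fun p q hpq =>
    apply_eq_zero_of_mul_diagonal_eq_diagonal_mul
      (by rwa [hA, hA', ← diagonal_comp_fst, ← diagonal_comp_fst] at hSA) (hc.ne hpq)
  replace hB : B = blockLowerBidiagonal X := hB
  replace hB' : B' = blockLowerBidiagonal X' := hB'
  have hblocks (i j : Fin m) : S.block i i * B.block i j = B'.block i j * S.block j j := by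
    rw [← hS.block_mul, ← hS.mul_block, hSB]
  subst hB hB'
  cases m with
  | zero => exact ⟨0, fun p => p.1.elim0, fun i => i.elim0⟩
  | succ n =>
    have hconst := Fin.apply_eq_apply_zero_of_succ (f := fun i => S.block i i) fun i => by
      simpa using hblocks i.succ i.castSucc
    refine ⟨S.block 0 0, fun ⟨i, a⟩ ⟨j, b⟩ => ?_, fun i => ?_⟩
    · split_ifs with hij
      · obtain rfl : i = j := hij
        rw [← hconst i, block_apply]
      · exact hS _ _ hij
    · simpa [hconst] using hblocks i i
end

section
/- With the matrices A and B of the Drozd construction (built from commuting operators X, Y on a finite-dimensional vector space V and 5 distinct scalars), one has AB = BA, A² = 0, AB² = 0, and B³ = 0; hence A and B define a module structure over R = k[a,b]/(a², ab², b³) on V^(32). -/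
open Matrix

/-- The matrix `A` of Drozd's Example 2.4: the `32·n`-square block matrix
`[[0,0,I₁₅],[0,0,0],[0,0,0]]` (blocks of size `n`, outer sizes `15n, 2n, 15n`). -/
def drozdA (k : Type) [Field k] (n : ℕ) :
    Matrix (Fin 32 × Fin n) (Fin 32 × Fin n) k :=
  Matrix.of fun p q =>
    if (p.1 : ℕ) < 15 ∧ (q.1 : ℕ) = (p.1 : ℕ) + 17 then (if p.2 = q.2 then 1 else 0)
    else 0

/-- The matrix `B` of Drozd's Example 2.4: the `32·n`-square block matrix
`[[B₁,0,B₂],[0,0,B₃],[0,0,B₁]]` with `B₁ = [[0,0,I₅],[0,0,0],[0,0,0]]`,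
`B₂ = [[0,0,0],[I₅,0,0],[0,C,0]]`, `B₃ = [0,D,0]`, `C = diag(c₁·1,…,c₅·1)` and
`D = [[1,0,1,1,1],[0,1,1,X,Y]]`, written out entrywise in terms of the `32 × 32` grid
of `n × n` blocks. -/
def drozdB (k : Type) [Field k] (n : ℕ) (c : Fin 5 → k)
    (X Y : Matrix (Fin n) (Fin n) k) :
    Matrix (Fin 32 × Fin n) (Fin 32 × Fin n) k :=
  Matrix.of fun p q =>
    let i := (p.1 : ℕ); let j := (q.1 : ℕ)
    if i < 5 ∧ j = i + 10 then (if p.2 = q.2 then 1 else 0)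
    else if 5 ≤ i ∧ i < 10 ∧ j = i + 12 then (if p.2 = q.2 then 1 else 0)
    else if h : 10 ≤ i ∧ i < 15 ∧ j = i + 12 then
      (if p.2 = q.2 then c ⟨i - 10, by omega⟩ else 0)
    else if i = 15 ∧ (j = 22 ∨ j = 24 ∨ j = 25 ∨ j = 26) then (if p.2 = q.2 then 1 else 0)
    else if i = 16 ∧ (j = 23 ∨ j = 24) then (if p.2 = q.2 then 1 else 0)
    else if i = 16 ∧ j = 25 then X p.2 q.2
    else if i = 16 ∧ j = 26 then Y p.2 q.2
    else if 17 ≤ i ∧ i < 22 ∧ j = i + 10 then (if p.2 = q.2 then 1 else 0)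
    else 0

/-!
Sort the 32 block indices into three levels, `0–9`, `10–21` and `22–31`. Every nonzero block of
`A` and of `B` leads from a lower to a strictly higher level, so any product of three of them
vanishes; this gives `AB² = B³ = 0`. Left multiplication by `A` moves block row `i + 17` to block
row `i` (for `i < 15`) and right multiplication moves block column `j - 17` to `j`; hence `A² = 0`,
and `AB = BA` compares the rows of `B` shifted by 17 with its columns shifted by 17. Since
`A` and `B` commute, polynomial evaluation inside the commutative subalgebra they generate factors
through `k[a,b]/(a², ab², b³)`.
-/

section LevelRaising

variable {ι R : Type*} [Semiring R]

def Matrix.RaisesLevelBy (ℓ : ι → ℕ) (d : ℕ) (M : Matrix ι ι R) : Prop :=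
  ∀ i j, M i j ≠ 0 → ℓ i + d ≤ ℓ j

theorem Matrix.RaisesLevelBy.mul [Fintype ι] {ℓ : ι → ℕ} {d e : ℕ} {M N : Matrix ι ι R}
    (hM : M.RaisesLevelBy ℓ d) (hN : N.RaisesLevelBy ℓ e) :
    (M * N).RaisesLevelBy ℓ (d + e) := by
  intro i j hij
  obtain ⟨r, -, hr⟩ := Finset.exists_ne_zero_of_sum_ne_zero hij
  have := hM i r (left_ne_zero_of_mul hr)
  have := hN r j (right_ne_zero_of_mul hr)
  omega

theorem Matrix.RaisesLevelBy.eq_zero {ℓ : ι → ℕ} {d : ℕ} {M : Matrix ι ι R}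
    (hM : M.RaisesLevelBy ℓ d) (hℓ : ∀ i, ℓ i < d) : M = 0 := by
  ext i j
  by_contra h
  have := hM i j h
  have := hℓ j
  omega

end LevelRaising

section CommutingEvaluation

variable {σ R S : Type*} [CommSemiring R] [Semiring S] [Algebra R S]

open scoped IsMulCommutative in
noncomputable def MvPolynomial.aevalOfCommute (v : σ → S) (hv : ∀ i j, Commute (v i) (v j)) :
    MvPolynomial σ R →ₐ[R] S :=
  haveI := Algebra.isMulCommutative_adjoin R (s := Set.range v) (by
    rintro _ ⟨i, rfl⟩ _ ⟨j, rfl⟩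
    exact hv i j)
  (Algebra.adjoin R (Set.range v)).val.comp
    (MvPolynomial.aeval fun i => ⟨v i, Algebra.subset_adjoin ⟨i, rfl⟩⟩)

@[simp]
theorem MvPolynomial.aevalOfCommute_X (v : σ → S) (hv : ∀ i j, Commute (v i) (v j)) (i : σ) :
    MvPolynomial.aevalOfCommute (R := R) v hv (MvPolynomial.X i) = v i := by
  simp [MvPolynomial.aevalOfCommute]

end CommutingEvaluation

theorem exists_quotient_algHom_of_commute {R S : Type*} [CommRing R] [Ring S]
    [Algebra R S] {a b : S} (hab : Commute a b) (ha : a * a = 0) (hab2 : a * b * b = 0)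
    (hb : b * b * b = 0) :
    ∃ φ : (MvPolynomial (Fin 2) R ⧸
        Ideal.span {(MvPolynomial.X 0 : MvPolynomial (Fin 2) R) ^ 2,
          MvPolynomial.X 0 * MvPolynomial.X 1 ^ 2,
          (MvPolynomial.X 1 : MvPolynomial (Fin 2) R) ^ 3}) →ₐ[R] S,
      φ (Ideal.Quotient.mk _ (MvPolynomial.X 0)) = a ∧
      φ (Ideal.Quotient.mk _ (MvPolynomial.X 1)) = b := by
  let f := MvPolynomial.aevalOfCommute (R := R) ![a, b]
    (by simp [Fin.forall_fin_two, hab, hab.symm, Commute.refl])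
  have hf0 : f (MvPolynomial.X 0) = a := MvPolynomial.aevalOfCommute_X ..
  have hf1 : f (MvPolynomial.X 1) = b := MvPolynomial.aevalOfCommute_X ..
  have hker : Ideal.span {(MvPolynomial.X 0 : MvPolynomial (Fin 2) R) ^ 2,
      MvPolynomial.X 0 * MvPolynomial.X 1 ^ 2, MvPolynomial.X 1 ^ 3} ≤ RingHom.ker f := by
    rw [Ideal.span_le]
    rintro _ (rfl | rfl | rfl) <;>
      simp only [SetLike.mem_coe, RingHom.mem_ker, map_mul, hf0, hf1, pow_succ, pow_zero,
        one_mul, ← mul_assoc, ha, hab2, hb]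
  exact ⟨Ideal.Quotient.liftₐ _ f fun p hp => hker hp, hf0, hf1⟩

section DrozdMatrices

variable {k : Type} [Field k] {n : ℕ}

def drozdLevel (i : Fin 32) : ℕ :=
  if (i : ℕ) < 10 then 0 else if (i : ℕ) < 22 then 1 else 2

theorem drozdLevel_lt_three (i : Fin 32) : drozdLevel i < 3 := by
  unfold drozdLevel
  split_ifs <;> omega

theorem drozdA_raisesLevelBy :
    (drozdA k n).RaisesLevelBy (fun p => drozdLevel p.1) 1 := by
  intro p q h
  simp only [drozdA, Matrix.of_apply, drozdLevel] at h ⊢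
  split_ifs at h ⊢ <;> first | omega | simp at h

theorem drozdB_raisesLevelBy (c : Fin 5 → k) (X Y : Matrix (Fin n) (Fin n) k) :
    (drozdB k n c X Y).RaisesLevelBy (fun p => drozdLevel p.1) 1 := by
  intro p q h
  simp only [drozdB, Matrix.of_apply] at h
  dsimp only [drozdLevel]
  split_ifs at h <;> (try simp at h) <;> split_ifs <;> omega

theorem drozdA_mul_apply (M : Matrix (Fin 32 × Fin n) (Fin 32 × Fin n) k)
    (p q : Fin 32 × Fin n) :
    (drozdA k n * M) p q =
      if h : (p.1 : ℕ) < 15 then M (⟨p.1 + 17, by omega⟩, p.2) q else 0 := by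
  rw [Matrix.mul_apply]
  split_ifs with h
  · rw [Finset.sum_eq_single (⟨p.1 + 17, by omega⟩, p.2)]
    · simp [drozdA, h]
    · rintro ⟨r, x⟩ - hr
      have hpr : drozdA k n p (r, x) = 0 := by
        simp only [drozdA, Matrix.of_apply]
        split_ifs with h₁ h₂
        · exact absurd (Prod.ext (Fin.ext h₁.2) h₂.symm) hr
        all_goals rfl
      rw [hpr, zero_mul]
    · simp
  · exact Finset.sum_eq_zero fun r _ => by simp [drozdA, h]

theorem mul_drozdA_apply (M : Matrix (Fin 32 × Fin n) (Fin 32 × Fin n) k)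
    (p q : Fin 32 × Fin n) :
    (M * drozdA k n) p q =
      if h : 17 ≤ (q.1 : ℕ) then M p (⟨q.1 - 17, by omega⟩, q.2) else 0 := by
  rw [Matrix.mul_apply]
  split_ifs with h
  · rw [Finset.sum_eq_single (⟨q.1 - 17, by omega⟩, q.2)]
    · simp only [drozdA, Matrix.of_apply]
      rw [if_pos (by omega), if_pos trivial, mul_one]
    · rintro ⟨r, x⟩ - hr
      have hrq : drozdA k n (r, x) q = 0 := by
        simp only [drozdA, Matrix.of_apply]
        split_ifs with h₁ h₂
        · exact absurd (Prod.ext (Fin.ext (by simp only; omega)) h₂) hr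
        all_goals rfl
      rw [hrq, mul_zero]
    · simp
  · exact Finset.sum_eq_zero fun r _ => by
      simp only [drozdA, Matrix.of_apply]
      rw [if_neg (by omega), mul_zero]

theorem drozdA_mul_self : drozdA k n * drozdA k n = 0 := by
  ext p q
  rw [drozdA_mul_apply]
  split_ifs
  · simp only [drozdA, Matrix.of_apply]
    rw [if_neg (by omega), Matrix.zero_apply]
  · rfl

theorem drozdB_apply_of_seventeen_le (c : Fin 5 → k) (X Y : Matrix (Fin n) (Fin n) k)
    {p : Fin 32 × Fin n} (hp : 17 ≤ (p.1 : ℕ)) (q : Fin 32 × Fin n) :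
    drozdB k n c X Y p q =
      if (p.1 : ℕ) < 22 ∧ (q.1 : ℕ) = p.1 + 10 then (if p.2 = q.2 then 1 else 0) else 0 := by
  simp only [drozdB, Matrix.of_apply, hp, true_and]
  rw [if_neg (by omega), if_neg (by omega), dif_neg (by omega), if_neg (by omega),
    if_neg (by omega), if_neg (by omega), if_neg (by omega)]

theorem drozdB_apply_of_lt_fifteen (c : Fin 5 → k) (X Y : Matrix (Fin n) (Fin n) k)
    (p : Fin 32 × Fin n) {q : Fin 32 × Fin n} (hq : (q.1 : ℕ) < 15) :
    drozdB k n c X Y p q =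
      if (p.1 : ℕ) < 5 ∧ (q.1 : ℕ) = p.1 + 10 then (if p.2 = q.2 then 1 else 0) else 0 := by
  simp only [drozdB, Matrix.of_apply]
  congr 1
  rw [if_neg (by omega), dif_neg (by omega), if_neg (by omega),
    if_neg (by omega), if_neg (by omega), if_neg (by omega), if_neg (by omega)]

theorem drozdA_commute_drozdB (c : Fin 5 → k) (X Y : Matrix (Fin n) (Fin n) k) :
    Commute (drozdA k n) (drozdB k n c X Y) := by
  ext p q
  rw [drozdA_mul_apply, mul_drozdA_apply]
  split_ifs with hp hq hq
  · rw [drozdB_apply_of_seventeen_le _ _ _ (by simp),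
      drozdB_apply_of_lt_fifteen _ _ _ _ (by simp; omega)]
    exact if_congr (by simp only; omega) rfl rfl
  · rw [drozdB_apply_of_seventeen_le _ _ _ (by simp), if_neg (by simp only; omega)]
  · rw [drozdB_apply_of_lt_fifteen _ _ _ _ (by simp; omega), if_neg (by simp only; omega)]
  · rfl

end DrozdMatrices

theorem drozd_matrices_satisfy_relations_general
    (k : Type) [Field k] (n : ℕ) (c : Fin 5 → k)
    (X Y : Matrix (Fin n) (Fin n) k) :
    let A := drozdA k n
    let B := drozdB k n c X Y
    A * B = B * A ∧ A * A = 0 ∧ A * B * B = 0 ∧ B * B * B = 0 ∧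
      ∃ φ : (MvPolynomial (Fin 2) k ⧸
          Ideal.span {(MvPolynomial.X 0 : MvPolynomial (Fin 2) k) ^ 2,
            MvPolynomial.X 0 * MvPolynomial.X 1 ^ 2,
            (MvPolynomial.X 1 : MvPolynomial (Fin 2) k) ^ 3})
          →ₐ[k] Matrix (Fin 32 × Fin n) (Fin 32 × Fin n) k,
        φ (Ideal.Quotient.mk _ (MvPolynomial.X 0)) = A ∧
        φ (Ideal.Quotient.mk _ (MvPolynomial.X 1)) = B := by
  intro A B
  have hA : A.RaisesLevelBy (fun p => drozdLevel p.1) 1 := drozdA_raisesLevelBy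
  have hB : B.RaisesLevelBy (fun p => drozdLevel p.1) 1 := drozdB_raisesLevelBy c X Y
  have hAB : A * B = B * A := drozdA_commute_drozdB c X Y
  have hA2 : A * A = 0 := drozdA_mul_self
  have hAB2 : A * B * B = 0 := ((hA.mul hB).mul hB).eq_zero fun p => drozdLevel_lt_three p.1
  have hB3 : B * B * B = 0 := ((hB.mul hB).mul hB).eq_zero fun p => drozdLevel_lt_three p.1
  exact ⟨hAB, hA2, hAB2, hB3, exists_quotient_algHom_of_commute hAB hA2 hAB2 hB3⟩

/-- part of Example 2.4, Drozd.  With the matrices `A`, `B` of the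
Drozd construction (built from commuting operators `X, Y` on a finite-dimensional
space and 5 distinct scalars `c₁,…,c₅`), one has `AB = BA`, `A² = 0`, `AB² = 0` and
`B³ = 0`; hence `A` and `B` define a module structure over
`R = k[a,b]/(a², ab², b³)` on `V^(32)`, i.e. there is a `k`-algebra map
`R → End(V^(32))` sending `a ↦ A` and `b ↦ B`. -/
theorem drozd_matrices_satisfy_relations
    (k : Type) [Field k] (n : ℕ) (c : Fin 5 → k) (hc : Function.Injective c)
    (X Y : Matrix (Fin n) (Fin n) k) (hXY : Commute X Y) :
    let A := drozdA k n
    let B := drozdB k n c X Y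
    A * B = B * A ∧ A * A = 0 ∧ A * B * B = 0 ∧ B * B * B = 0 ∧
      ∃ φ : (MvPolynomial (Fin 2) k ⧸
          Ideal.span {(MvPolynomial.X 0 : MvPolynomial (Fin 2) k) ^ 2,
            MvPolynomial.X 0 * MvPolynomial.X 1 ^ 2,
            (MvPolynomial.X 1 : MvPolynomial (Fin 2) k) ^ 3})
          →ₐ[k] Matrix (Fin 32 × Fin n) (Fin 32 × Fin n) k,
        φ (Ideal.Quotient.mk _ (MvPolynomial.X 0)) = A ∧
        φ (Ideal.Quotient.mk _ (MvPolynomial.X 1)) = B :=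
  drozd_matrices_satisfy_relations_general k n c X Y
end

section
/- Let k be a field, X, Y, X', Y' be n×n matrices over k, and set D = [[I,0,I,I,I],[0,I,I,X,Y]] and D' = [[I,0,I,I,I],[0,I,I,X',Y']] (2n×5n block matrices). Suppose S is a 2n×2n matrix and Z_1,...,Z_5 are n×n matrices with S·D = D'·diag(Z_1,...,Z_5). Then S = diag(σ, σ) where σ = Z_1 = Z_2 = Z_3 = Z_4 = Z_5 and σX = X'σ and σY = Y'σ. -/
/-!
Cut every matrix into `n × n` blocks (`Matrix.comp`), so that `S·D = D'·diag(Z)` becomes an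
identity of `2 × 5` matrices over the ring of `n × n` matrices. Its first two block columns
say `S = diag(Z₁, Z₂)`; the third forces `Z₁ = Z₃ = Z₂`; in the last two the top row gives
`Z₄ = Z₅ = Z₁` and the bottom row then reads `σX = X'σ`, `σY = Y'σ`.
-/

open Matrix

namespace Matrix

theorem comp_symm_mul {I J H K R : Type*} [Fintype J] [Fintype K]
    [NonUnitalNonAssocSemiring R] (M : Matrix (I × K) (J × K) R) (N : Matrix (J × K) (H × K) R) :
    (comp I H K K R).symm (M * N) = (comp I J K K R).symm M * (comp J H K K R).symm N := by
  ext i h a b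
  simp only [comp_symm_apply, mul_apply, sum_apply, Fintype.sum_prod_type]

theorem comp_symm_of_blockwise_diagonal {I K R : Type*} [DecidableEq I] [Zero R]
    (Z : I → Matrix K K R) :
    (comp I I K K R).symm (of fun p q => if p.1 = q.1 then Z p.1 p.2 q.2 else 0) =
      diagonal Z := by
  ext i j a b
  by_cases hij : i = j <;> simp [hij]

end Matrix

theorem comp_symm_D_blocks {K R : Type*} [DecidableEq K] [Zero R] [One R] (X Y : Matrix K K R) :
    (comp (Fin 2) (Fin 5) K K R).symm (of fun p q =>
      if p.1 = 0 then
        (if q.1 = 0 ∨ q.1 = 2 ∨ q.1 = 3 ∨ q.1 = 4 then (if p.2 = q.2 then 1 else 0) else 0)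
      else
        (if q.1 = 1 ∨ q.1 = 2 then (if p.2 = q.2 then 1 else 0)
         else if q.1 = 3 then X p.2 q.2
         else if q.1 = 4 then Y p.2 q.2
         else 0)) = !![1, 0, 1, 1, 1; 0, 1, 1, X, Y] := by
  ext i j a b
  fin_cases i <;> fin_cases j <;> simp [one_apply]

theorem exists_diagonal_const_of_mul_D_eq_D_mul_diagonal {R : Type*} [NonAssocSemiring R]
    {x y x' y' : R} {T : Matrix (Fin 2) (Fin 2) R} {z : Fin 5 → R}
    (h : T * !![1, 0, 1, 1, 1; 0, 1, 1, x, y] = !![1, 0, 1, 1, 1; 0, 1, 1, x', y'] * diagonal z) :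
    ∃ σ, (∀ j, z j = σ) ∧ T = diagonal (fun _ => σ) ∧ σ * x = x' * σ ∧ σ * y = y' * σ := by
  have e (i : Fin 2) (j : Fin 5) := congrFun₂ h i j
  simp only [mul_diagonal] at e
  simp only [mul_apply, Fin.sum_univ_two] at e
  have t0 := e 0 0; have t1 := e 0 1; have t2 := e 0 2; have t3 := e 0 3; have t4 := e 0 4
  have b0 := e 1 0; have b1 := e 1 1; have b2 := e 1 2; have b3 := e 1 3; have b4 := e 1 4
  simp only [Fin.isValue, of_apply, cons_val', cons_val_zero, cons_val_one, cons_val,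
    cons_val_fin_one, mul_one, mul_zero, one_mul, zero_mul, add_zero, zero_add]
    at t0 t1 t2 t3 t4 b0 b1 b2 b3 b4
  simp only [t0, t1, b0, b1, zero_mul, add_zero, zero_add] at t2 t3 t4 b2 b3 b4
  have hz : ∀ j, z j = z 0 := by
    intro j
    fin_cases j
    exacts [rfl, b2.trans t2.symm, t2.symm, t3.symm, t4.symm]
  rw [hz 1] at b1 b3 b4
  rw [hz 3] at b3
  rw [hz 4] at b4
  refine ⟨z 0, hz, ?_, b3, b4⟩
  ext i j
  fin_cases i <;> fin_cases j <;> simp [t0, t1, b0, b1]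

/-- Let `k` be a field, `X, Y, X', Y'` be `n × n` matrices, and
`D = [[I,0,I,I,I],[0,I,I,X,Y]]`, `D' = [[I,0,I,I,I],[0,I,I,X',Y']]` (2n × 5n block
matrices).  If `S` is `2n × 2n` and `Z_1,…,Z_5` are `n × n` with
`S·D = D'·diag(Z_1,…,Z_5)`, then `S = diag(σ, σ)` where
`σ = Z_1 = Z_2 = Z_3 = Z_4 = Z_5`, `σX = X'σ` and `σY = Y'σ`. -/
theorem D_matrix_intertwiner
    (k : Type) [Field k] (n : ℕ)
    (X Y X' Y' : Matrix (Fin n) (Fin n) k)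
    (Z : Fin 5 → Matrix (Fin n) (Fin n) k)
    (D : Matrix (Fin 2 × Fin n) (Fin 5 × Fin n) k)
    (hD : D = Matrix.of fun p q =>
      if p.1 = 0 then
        (if q.1 = 0 ∨ q.1 = 2 ∨ q.1 = 3 ∨ q.1 = 4 then (if p.2 = q.2 then 1 else 0) else 0)
      else
        (if q.1 = 1 ∨ q.1 = 2 then (if p.2 = q.2 then 1 else 0)
         else if q.1 = 3 then X p.2 q.2
         else if q.1 = 4 then Y p.2 q.2
         else 0))
    (D' : Matrix (Fin 2 × Fin n) (Fin 5 × Fin n) k)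
    (hD' : D' = Matrix.of fun p q =>
      if p.1 = 0 then
        (if q.1 = 0 ∨ q.1 = 2 ∨ q.1 = 3 ∨ q.1 = 4 then (if p.2 = q.2 then 1 else 0) else 0)
      else
        (if q.1 = 1 ∨ q.1 = 2 then (if p.2 = q.2 then 1 else 0)
         else if q.1 = 3 then X' p.2 q.2
         else if q.1 = 4 then Y' p.2 q.2
         else 0))
    (S : Matrix (Fin 2 × Fin n) (Fin 2 × Fin n) k)
    (hS : S * D = D' * (Matrix.of fun p q => if p.1 = q.1 then Z p.1 p.2 q.2 else 0)) :
    ∃ σ : Matrix (Fin n) (Fin n) k,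
      (∀ j, Z j = σ) ∧
      (∀ p q, S p q = if p.1 = q.1 then σ p.2 q.2 else 0) ∧
      σ * X = X' * σ ∧ σ * Y = Y' * σ := by
  -- As stated, the product in `hS` elaborates through `CStarMatrix`; restate it with `Matrix`'s.
  replace hS : S * D = D' * (of fun p q => if p.1 = q.1 then Z p.1 p.2 q.2 else 0 :
      Matrix (Fin 5 × Fin n) (Fin 5 × Fin n) k) := hS
  have h := congrArg (comp (Fin 2) (Fin 5) (Fin n) (Fin n) k).symm hS
  rw [comp_symm_mul, comp_symm_mul, hD, hD', comp_symm_D_blocks, comp_symm_D_blocks,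
    comp_symm_of_blockwise_diagonal] at h
  obtain ⟨σ, hZ, hT, hX, hY⟩ := exists_diagonal_const_of_mul_D_eq_D_mul_diagonal h
  refine ⟨σ, hZ, fun p q => ?_, hX, hY⟩
  have hpq := congrFun₂ (congrFun₂ hT p.1 q.1) p.2 q.2
  rw [comp_symm_apply, diagonal_apply] at hpq
  rw [hpq]
  split_ifs <;> rfl
end

section
/- In the setting of the inflated matrix factorizations of f (order ≥ 4), let Φ̄_i, Ψ̄_i denote reductions modulo m² of the partial inflated factorizations. If C and D are (m·2^i)×(m·2^i) matrices over k with C·Φ̄_i = Φ̄_i'·D and D·Ψ̄_i = Ψ̄_i'·C, then C and D are (m×m)-block lower triangular. -/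
open Matrix MvPowerSeries

namespace MvPowerSeries

variable {σ R : Type*} [CommSemiring R]

theorem constantCoeff_eq_zero_of_mem_span_X {f : MvPowerSeries σ R}
    (hf : f ∈ Ideal.span (Set.range X)) : constantCoeff f = 0 := by
  have : Ideal.span (Set.range (X : σ → MvPowerSeries σ R)) ≤ RingHom.ker constantCoeff :=
    Ideal.span_le.2 <| by rintro _ ⟨s, rfl⟩; simp
  exact this hf

theorem two_le_order_of_mem_span_X_sq {f : MvPowerSeries σ R}
    (hf : f ∈ Ideal.span (Set.range X) ^ 2) : 2 ≤ f.order := by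
  rw [pow_two] at hf
  refine Submodule.mul_induction_on hf (fun a ha b hb => ?_) (fun a b ha hb => ?_)
  · calc (2 : ℕ∞) = 1 + 1 := by norm_num
      _ ≤ a.order + b.order := add_le_add
          (one_le_order_iff_constCoeff_eq_zero.2 (constantCoeff_eq_zero_of_mem_span_X ha))
          (one_le_order_iff_constCoeff_eq_zero.2 (constantCoeff_eq_zero_of_mem_span_X hb))
      _ ≤ (a * b).order := le_order_mul
  · exact (le_min ha hb).trans min_order_le_add

theorem coeff_single_one_eq_zero_of_mem_span_X_sq {f : MvPowerSeries σ R}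
    (hf : f ∈ Ideal.span (Set.range X) ^ 2) (s : σ) : coeff (Finsupp.single s 1) f = 0 :=
  coeff_of_lt_order <| by
    rw [Finsupp.degree_single]
    exact lt_of_lt_of_le (by norm_num) (two_le_order_of_mem_span_X_sq hf)

end MvPowerSeries

namespace Matrix

variable {ι σ R : Type*} [CommSemiring R] [Fintype ι]

theorem map_coeff_map_C_mul (A : Matrix ι ι R) (N : Matrix ι ι (MvPowerSeries σ R))
    (d : σ →₀ ℕ) : (A.map MvPowerSeries.C * N).map (MvPowerSeries.coeff d) =
      A * N.map (MvPowerSeries.coeff d) := by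
  ext p q
  rw [map_apply, mul_apply, mul_apply, map_sum]
  simp only [map_apply, MvPowerSeries.coeff_C_mul]

theorem map_coeff_mul_map_C (N : Matrix ι ι (MvPowerSeries σ R)) (B : Matrix ι ι R)
    (d : σ →₀ ℕ) : (N * B.map MvPowerSeries.C).map (MvPowerSeries.coeff d) =
      N.map (MvPowerSeries.coeff d) * B := by
  ext p q
  rw [map_apply, mul_apply, mul_apply, map_sum]
  simp only [map_apply, MvPowerSeries.coeff_mul_C]

theorem mul_map_coeff_eq_of_forall_sub_mem_sq {R : Type*} [CommRing R] {A B : Matrix ι ι R}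
    {N N' : Matrix ι ι (MvPowerSeries σ R)}
    (h : ∀ p q, (A.map (MvPowerSeries.C (σ := σ)) * N) p q -
        (N' * B.map (MvPowerSeries.C (σ := σ))) p q ∈
      Ideal.span (Set.range (MvPowerSeries.X : σ → MvPowerSeries σ R)) ^ 2) (s : σ) :
    A * N.map (MvPowerSeries.coeff (Finsupp.single s 1)) =
      N'.map (MvPowerSeries.coeff (Finsupp.single s 1)) * B := by
  rw [← map_coeff_map_C_mul, ← map_coeff_mul_map_C]
  ext p q
  simpa [sub_eq_zero] using MvPowerSeries.coeff_single_one_eq_zero_of_mem_span_X_sq (h p q) s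

theorem comp_symm_mul_eq_of_mul_comp_eq {I J R : Type*} [Fintype I] [Fintype J]
    [Semiring R] {C D : Matrix (I × J) (I × J) R} {X : Matrix I I (Matrix J J R)}
    (h : C * comp I I J J R X = comp I I J J R X * D) :
    (comp I I J J R).symm C * X = X * (comp I I J J R).symm D := by
  apply (compRingEquiv I J R).injective
  simpa [map_mul] using h

variable {A : Type*} [Ring A] {n o : Type*} [Fintype n] [Fintype o]

theorem toBlocks_of_mul_fromBlocks_one_eq [DecidableEq n] {M N : Matrix (n ⊕ n) (n ⊕ n) A}
    (h : M * fromBlocks 0 0 1 0 = fromBlocks 0 0 1 0 * N) :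
    M.toBlocks₁₂ = 0 ∧ M.toBlocks₂₂ = N.toBlocks₁₁ ∧ N.toBlocks₁₂ = 0 := by
  rw [← fromBlocks_toBlocks M, ← fromBlocks_toBlocks N, fromBlocks_multiply,
    fromBlocks_multiply] at h
  simp only [Matrix.mul_zero, Matrix.zero_mul, Matrix.mul_one, Matrix.one_mul, add_zero,
    zero_add, fromBlocks_inj] at h
  exact ⟨h.1, h.2.2.1, h.2.2.2.symm⟩

theorem mul_fromBlocks_one_eq_of_mul_fromBlocks_neg_one_eq [DecidableEq n]
    {M N : Matrix (n ⊕ n) (n ⊕ n) A}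
    (h : M * fromBlocks 0 0 (-1) 0 = fromBlocks 0 0 (-1) 0 * N) :
    M * fromBlocks 0 0 1 0 = fromBlocks 0 0 1 0 * N := by
  rwa [← neg_zero, ← fromBlocks_neg, Matrix.mul_neg, Matrix.neg_mul, neg_inj] at h

theorem toBlocks₁₁_mul_eq_of_mul_fromBlocks_eq {M N : Matrix (n ⊕ o) (n ⊕ o) A}
    {E E' : Matrix n n A} {F F' : Matrix o o A}
    (h : M * fromBlocks E 0 0 F = fromBlocks E' 0 0 F' * N) :
    M.toBlocks₁₁ * E = E' * N.toBlocks₁₁ := by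
  rw [← fromBlocks_toBlocks M, ← fromBlocks_toBlocks N, fromBlocks_multiply,
    fromBlocks_multiply] at h
  simpa using congrArg toBlocks₁₁ h

theorem reindex_symm_mul_eq_of_mul_reindex_eq {m : Type*} [Fintype m] (e : n ≃ m)
    {C D : Matrix m m A} {X Y : Matrix n n A} (h : C * reindex e e X = reindex e e Y * D) :
    reindex e.symm e.symm C * X = Y * reindex e.symm e.symm D := by
  have := congrArg (reindexRingEquiv A e.symm) h
  rwa [map_mul, map_mul, coe_reindexRingEquiv, ← reindex_symm, Equiv.symm_apply_apply,
    Equiv.symm_apply_apply] at this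

end Matrix

section Knorrer

variable {S : Type} [CommRing S]

def knorrerEquiv (i : ℕ) : Fin (2 ^ i) ⊕ Fin (2 ^ i) ≃ Fin (2 ^ (i + 1)) :=
  finSumFinEquiv.trans (finCongr (by rw [pow_succ, mul_two]))

@[simp]
theorem val_knorrerEquiv_inl {i : ℕ} (a : Fin (2 ^ i)) : (knorrerEquiv i (Sum.inl a) : ℕ) = a :=
  rfl

@[simp]
theorem val_knorrerEquiv_inr {i : ℕ} (a : Fin (2 ^ i)) :
    (knorrerEquiv i (Sum.inr a) : ℕ) = 2 ^ i + a :=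
  rfl

theorem knorrerPair_succ (u v : ℕ → S) (i : ℕ) :
    knorrerPair u v (i + 1) =
      (reindex (knorrerEquiv i) (knorrerEquiv i)
          (fromBlocks (knorrerPair u v i).1 (-v (i + 1) • 1) (u (i + 1) • 1)
            (knorrerPair u v i).2),
        reindex (knorrerEquiv i) (knorrerEquiv i)
          (fromBlocks (knorrerPair u v i).2 (v (i + 1) • 1) (-u (i + 1) • 1)
            (knorrerPair u v i).1)) :=
  rfl

theorem knorrerPair_map {T : Type} {F : Type*} [CommRing T] [FunLike F S T]
    [AddMonoidHomClass F S T] (φ : F) (u v : ℕ → S) (i : ℕ) :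
    Prod.map (·.map φ) (·.map φ) (knorrerPair u v i) = knorrerPair (φ ∘ u) (φ ∘ v) i := by
  have smul_one_map : ∀ {N : Type} [DecidableEq N] (c : S),
      (c • (1 : Matrix N N S)).map φ = φ c • 1 := by
    intro N _ c
    ext p q
    by_cases hpq : p = q <;> simp [hpq, one_apply]
  induction i with
  | zero => ext <;> simp [knorrerPair]
  | succ i ih =>
    simp only [Prod.ext_iff, Prod.map_fst, Prod.map_snd] at ih
    simp only [knorrerPair_succ, Prod.map, reindex_apply, ← submatrix_map, fromBlocks_map,
      smul_one_map, map_neg, Function.comp_apply, ih]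

theorem knorrerPair_eq_zero {u v : ℕ → S} {i : ℕ} (hu : ∀ j ≤ i, u j = 0)
    (hv : ∀ j ≤ i, v j = 0) : knorrerPair u v i = 0 := by
  induction i with
  | zero => ext <;> simp [knorrerPair, hu, hv]
  | succ i ih =>
    rw [knorrerPair_succ, ih (fun j hj => hu j (by omega)) (fun j hj => hv j (by omega)),
      hu _ le_rfl, hv _ le_rfl]
    ext <;> simp

theorem isLowerTriangular_reindex_knorrerEquiv {α : Type*} [Zero α] {i : ℕ}
    {M : Matrix (Fin (2 ^ i) ⊕ Fin (2 ^ i)) (Fin (2 ^ i) ⊕ Fin (2 ^ i)) α}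
    (h₁₁ : M.toBlocks₁₁.IsLowerTriangular) (h₁₂ : M.toBlocks₁₂ = 0)
    (h₂₂ : M.toBlocks₂₂.IsLowerTriangular) :
    (reindex (knorrerEquiv i) (knorrerEquiv i) M).IsLowerTriangular := by
  rw [IsLowerTriangular, blockTriangular_reindex_iff]
  rintro (a | a) (b | b) hab <;>
    simp only [Function.comp_apply, OrderDual.toDual_lt_toDual] at hab <;>
    rw [Fin.lt_def] at hab <;>
    simp only [val_knorrerEquiv_inl, val_knorrerEquiv_inr] at hab
  · exact h₁₁ (OrderDual.toDual_lt_toDual.2 (Fin.lt_def.2 hab))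
  · exact congrFun₂ h₁₂ a b
  · omega
  · exact h₂₂ (OrderDual.toDual_lt_toDual.2 (Fin.lt_def.2 (by omega)))

end Knorrer

/-- The `x_l`-coefficient of `knorrerPair u v i` when `u (l + 1) = x_l - a_l z` is the only entry
of `u, v` with a linear `x_l`-term; its integer entries are read in the ring `A`. -/
def knorrerCoeffX (A : Type) [Ring A] (l i : ℕ) :
    Matrix (Fin (2 ^ i)) (Fin (2 ^ i)) A × Matrix (Fin (2 ^ i)) (Fin (2 ^ i)) A :=
  Prod.map (·.map (Int.castRingHom A)) (·.map (Int.castRingHom A))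
    (knorrerPair (Pi.single (l + 1) 1) 0 i)

section KnorrerCoeffX

variable {A : Type} [Ring A]

theorem knorrerCoeffX_succ_self (i : ℕ) :
    knorrerCoeffX A i (i + 1) =
      (reindex (knorrerEquiv i) (knorrerEquiv i) (fromBlocks 0 0 1 0),
        reindex (knorrerEquiv i) (knorrerEquiv i) (fromBlocks 0 0 (-1) 0)) := by
  rw [knorrerCoeffX, knorrerPair_succ,
    knorrerPair_eq_zero (v := 0) (fun j hj => Pi.single_eq_of_ne (by omega) _) (fun _ _ => rfl)]
  simp [reindex_apply, ← submatrix_map, fromBlocks_map, Matrix.map_neg]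

theorem knorrerCoeffX_succ_of_lt {l i : ℕ} (hl : l < i) :
    knorrerCoeffX A l (i + 1) =
      (reindex (knorrerEquiv i) (knorrerEquiv i)
          (fromBlocks (knorrerCoeffX A l i).1 0 0 (knorrerCoeffX A l i).2),
        reindex (knorrerEquiv i) (knorrerEquiv i)
          (fromBlocks (knorrerCoeffX A l i).2 0 0 (knorrerCoeffX A l i).1)) := by
  rw [knorrerCoeffX, knorrerPair_succ, Pi.single_eq_of_ne (by omega)]
  simp [knorrerCoeffX, reindex_apply, ← submatrix_map, fromBlocks_map]

theorem isLowerTriangular_of_intertwines_knorrerCoeffX (i : ℕ)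
    (C D : Matrix (Fin (2 ^ i)) (Fin (2 ^ i)) A)
    (hC : ∀ l < i, C * (knorrerCoeffX A l i).1 = (knorrerCoeffX A l i).1 * D)
    (hD : ∀ l < i, D * (knorrerCoeffX A l i).2 = (knorrerCoeffX A l i).2 * C) :
    C.IsLowerTriangular ∧ D.IsLowerTriangular := by
  induction i with
  | zero =>
    refine ⟨fun p q h => ?_, fun p q h => ?_⟩ <;>
      exact absurd h (by simp [Fin.lt_def])
  | succ i ih =>
    set e := knorrerEquiv i
    set C₀ := reindex e.symm e.symm C
    set D₀ := reindex e.symm e.symm D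
    obtain ⟨hC₁₂, hC₂₂, hD₁₂⟩ := toBlocks_of_mul_fromBlocks_one_eq
      (reindex_symm_mul_eq_of_mul_reindex_eq e
        (by simpa [knorrerCoeffX_succ_self] using hC i (by omega)))
    obtain ⟨-, hD₂₂, -⟩ := toBlocks_of_mul_fromBlocks_one_eq
      (mul_fromBlocks_one_eq_of_mul_fromBlocks_neg_one_eq
        (reindex_symm_mul_eq_of_mul_reindex_eq e
          (by simpa [knorrerCoeffX_succ_self] using hD i (by omega))))
    obtain ⟨hC₁₁, hD₁₁⟩ := ih C₀.toBlocks₁₁ D₀.toBlocks₁₁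
      (fun l hl => toBlocks₁₁_mul_eq_of_mul_fromBlocks_eq (reindex_symm_mul_eq_of_mul_reindex_eq e
        (by simpa [knorrerCoeffX_succ_of_lt hl] using hC l (by omega))))
      (fun l hl => toBlocks₁₁_mul_eq_of_mul_fromBlocks_eq (reindex_symm_mul_eq_of_mul_reindex_eq e
        (by simpa [knorrerCoeffX_succ_of_lt hl] using hD l (by omega))))
    have hC : C = reindex e e C₀ := by simp [C₀]
    have hD : D = reindex e e D₀ := by simp [D₀]
    rw [hC, hD]
    exact ⟨isLowerTriangular_reindex_knorrerEquiv hC₁₁ hC₁₂ (hC₂₂ ▸ hD₁₁),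
      isLowerTriangular_reindex_knorrerEquiv hD₁₁ hD₁₂ (hD₂₂ ▸ hC₁₁)⟩

end KnorrerCoeffX

section Inflation

variable {R : Type} [CommRing R] {n : ℕ}

noncomputable def knorrerSeqU (a : Fin n → R) : ℕ → MvPowerSeries (Option (Fin n)) R
  | 0 => X none ^ 2
  | j + 1 => if hj : j < n then X (some ⟨j, hj⟩) - C (a ⟨j, hj⟩) * X none else 0

def knorrerSeqV (h : MvPowerSeries (Option (Fin n)) R)
    (g : Fin n → MvPowerSeries (Option (Fin n)) R) : ℕ → MvPowerSeries (Option (Fin n)) R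
  | 0 => h
  | j + 1 => if hj : j < n then g ⟨j, hj⟩ else 0

theorem coeff_single_some_knorrerSeqU (a : Fin n → R) (l : Fin n) (j : ℕ) :
    coeff (Finsupp.single (some l) 1) (knorrerSeqU a j) =
      ((Pi.single (l.val + 1) 1 : ℕ → ℤ) j : R) := by
  rcases j with _ | j
  · simp [knorrerSeqU, coeff_X_pow, Finsupp.single_eq_single_iff]
  · by_cases hj : j < n
    · by_cases hjl : j = l
      · simp [knorrerSeqU, coeff_X, Finsupp.single_eq_single_iff, hjl]
      · simp [knorrerSeqU, hj, coeff_X, Finsupp.single_eq_single_iff, Fin.ext_iff, Ne.symm hjl]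
    · simp [knorrerSeqU, hj, Pi.single_eq_of_ne (show j + 1 ≠ l + 1 by omega)]

theorem coeff_single_one_knorrerSeqV {h : MvPowerSeries (Option (Fin n)) R}
    {g : Fin n → MvPowerSeries (Option (Fin n)) R} (hh : h ∈ Ideal.span (Set.range X) ^ 2)
    (hg : ∀ i, g i ∈ Ideal.span (Set.range X) ^ 2) (s : Option (Fin n)) (j : ℕ) :
    coeff (Finsupp.single s 1) (knorrerSeqV h g j) = 0 := by
  rcases j with _ | j
  · exact coeff_single_one_eq_zero_of_mem_span_X_sq hh s
  · by_cases hj : j < n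
    · simpa [knorrerSeqV, hj] using coeff_single_one_eq_zero_of_mem_span_X_sq (hg _) s
    · simp [knorrerSeqV, hj]

end Inflation

theorem map_coeff_inflate_knorrerPair {k R σ : Type} [Field k] [CommRing R] {m : ℕ}
    (ρ : R →+* Matrix (Fin m) (Fin m) k) {u v : ℕ → MvPowerSeries σ R} {d : σ →₀ ℕ} {l : ℕ}
    (hu : ∀ j, coeff d (u j) = ((Pi.single (l + 1) 1 : ℕ → ℤ) j : R))
    (hv : ∀ j, coeff d (v j) = 0) (i : ℕ) :
    (inflate ρ (knorrerPair u v i).1).map (coeff d) =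
        comp _ _ _ _ k (knorrerCoeffX (Matrix (Fin m) (Fin m) k) l i).1 ∧
      (inflate ρ (knorrerPair u v i).2).map (coeff d) =
        comp _ _ _ _ k (knorrerCoeffX (Matrix (Fin m) (Fin m) k) l i).2 := by
  have hcoeff : Prod.map (·.map (coeff d)) (·.map (coeff d)) (knorrerPair u v i) =
      Prod.map (·.map (Int.castRingHom R)) (·.map (Int.castRingHom R))
        (knorrerPair (Pi.single (l + 1) 1) 0 i) := by
    rw [knorrerPair_map (coeff d), knorrerPair_map (Int.castRingHom R)]
    congr 1 <;> ext j <;> simp [hu, hv]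
  have hinflate : ∀ M : Matrix (Fin (2 ^ i)) (Fin (2 ^ i)) (MvPowerSeries σ R),
      (inflate ρ M).map (coeff d) = comp _ _ _ _ k ((M.map (coeff d)).map ρ) := fun _ => rfl
  have hρ : ⇑ρ ∘ ⇑(Int.castRingHom R) = Int.castRingHom _ :=
    congrArg DFunLike.coe (RingHom.ext_int (ρ.comp (Int.castRingHom R)) _)
  simp only [Prod.ext_iff, Prod.map_fst, Prod.map_snd] at hcoeff
  simp only [hinflate, hcoeff, Matrix.map_map, hρ, knorrerCoeffX, Prod.map_fst, Prod.map_snd,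
    and_self]

theorem reduction_hom_block_lower_triangular_general
    (k : Type) [Field k] (n m : ℕ)
    (R R' : Type) [CommRing R] [Algebra k R] [CommRing R'] [Algebra k R']
    (ρ : R →ₐ[k] Matrix (Fin m) (Fin m) k)
    (ρ' : R' →ₐ[k] Matrix (Fin m) (Fin m) k)
    (a : Fin n → R) (a' : Fin n → R')
    (h : MvPowerSeries (Option (Fin n)) R) (g : Fin n → MvPowerSeries (Option (Fin n)) R)
    (hh : h ∈ (Ideal.span (Set.range
        (MvPowerSeries.X : Option (Fin n) → MvPowerSeries (Option (Fin n)) R))) ^ 2)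
    (hg : ∀ i, g i ∈ (Ideal.span (Set.range
        (MvPowerSeries.X : Option (Fin n) → MvPowerSeries (Option (Fin n)) R))) ^ 3)
    (h' : MvPowerSeries (Option (Fin n)) R')
    (g' : Fin n → MvPowerSeries (Option (Fin n)) R')
    (hh' : h' ∈ (Ideal.span (Set.range
        (MvPowerSeries.X : Option (Fin n) → MvPowerSeries (Option (Fin n)) R'))) ^ 2)
    (hg' : ∀ i, g' i ∈ (Ideal.span (Set.range
        (MvPowerSeries.X : Option (Fin n) → MvPowerSeries (Option (Fin n)) R'))) ^ 3)
    (i : ℕ) (hi : i ≤ n) :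
    let u : ℕ → MvPowerSeries (Option (Fin n)) R := fun j =>
      match j with
      | 0 => (MvPowerSeries.X none) ^ 2
      | j + 1 => if hj : j < n then
          MvPowerSeries.X (some ⟨j, hj⟩)
            - MvPowerSeries.C (σ := Option (Fin n)) (R := R) (a ⟨j, hj⟩) * MvPowerSeries.X none
        else 0
    let v : ℕ → MvPowerSeries (Option (Fin n)) R := fun j =>
      match j with
      | 0 => h
      | j + 1 => if hj : j < n then g ⟨j, hj⟩ else 0
    let Φ := inflate ρ.toRingHom (knorrerPair u v i).1
    let Ψ := inflate ρ.toRingHom (knorrerPair u v i).2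
    let u' : ℕ → MvPowerSeries (Option (Fin n)) R' := fun j =>
      match j with
      | 0 => (MvPowerSeries.X none) ^ 2
      | j + 1 => if hj : j < n then
          MvPowerSeries.X (some ⟨j, hj⟩)
            - MvPowerSeries.C (σ := Option (Fin n)) (R := R') (a' ⟨j, hj⟩) * MvPowerSeries.X none
        else 0
    let v' : ℕ → MvPowerSeries (Option (Fin n)) R' := fun j =>
      match j with
      | 0 => h'
      | j + 1 => if hj : j < n then g' ⟨j, hj⟩ else 0
    let Φ' := inflate ρ'.toRingHom (knorrerPair u' v' i).1
    let Ψ' := inflate ρ'.toRingHom (knorrerPair u' v' i).2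
    ∀ C D : Matrix ((Fin (2 ^ i)) × Fin m) ((Fin (2 ^ i)) × Fin m) k,
      (∀ p q, (C.map ⇑(MvPowerSeries.C (σ := Option (Fin n)) (R := k)) * Φ) p q
              - (Φ' * D.map ⇑(MvPowerSeries.C (σ := Option (Fin n)) (R := k))) p q
            ∈ (Ideal.span (Set.range
                (MvPowerSeries.X : Option (Fin n) → MvPowerSeries (Option (Fin n)) k))) ^ 2) →
      (∀ p q, (D.map ⇑(MvPowerSeries.C (σ := Option (Fin n)) (R := k)) * Ψ) p q
              - (Ψ' * C.map ⇑(MvPowerSeries.C (σ := Option (Fin n)) (R := k))) p q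
            ∈ (Ideal.span (Set.range
                (MvPowerSeries.X : Option (Fin n) → MvPowerSeries (Option (Fin n)) k))) ^ 2) →
      (∀ p q : Fin (2 ^ i), p < q → ∀ α β : Fin m,
        C (p, α) (q, β) = 0 ∧ D (p, α) (q, β) = 0) := by
  intro u v Φ Ψ u' v' Φ' Ψ' C D hC hD
  set K := knorrerCoeffX (Matrix (Fin m) (Fin m) k)
  set C₀ := (comp _ _ _ _ k).symm C
  set D₀ := (comp _ _ _ _ k).symm D
  have hK : ∀ l < i, C₀ * (K l i).1 = (K l i).1 * D₀ ∧ D₀ * (K l i).2 = (K l i).2 * C₀ := by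
    intro l hl
    have hln : l < n := by omega
    obtain ⟨hΦ, hΨ⟩ := map_coeff_inflate_knorrerPair ρ.toRingHom (u := u) (v := v)
      (coeff_single_some_knorrerSeqU a ⟨l, hln⟩)
      (coeff_single_one_knorrerSeqV hh (fun j => Ideal.pow_le_pow_right (by norm_num) (hg j)) _)
      i
    obtain ⟨hΦ', hΨ'⟩ := map_coeff_inflate_knorrerPair ρ'.toRingHom (u := u') (v := v')
      (coeff_single_some_knorrerSeqU a' ⟨l, hln⟩)
      (coeff_single_one_knorrerSeqV hh' (fun j => Ideal.pow_le_pow_right (by norm_num) (hg' j)) _)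
      i
    have hCΦ := mul_map_coeff_eq_of_forall_sub_mem_sq hC (some ⟨l, hln⟩)
    have hDΨ := mul_map_coeff_eq_of_forall_sub_mem_sq hD (some ⟨l, hln⟩)
    rw [hΦ, hΦ'] at hCΦ
    rw [hΨ, hΨ'] at hDΨ
    exact ⟨comp_symm_mul_eq_of_mul_comp_eq hCΦ, comp_symm_mul_eq_of_mul_comp_eq hDΨ⟩
  obtain ⟨hC₀, hD₀⟩ := isLowerTriangular_of_intertwines_knorrerCoeffX i C₀ D₀
    (fun l hl => (hK l hl).1) (fun l hl => (hK l hl).2)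
  intro p q hpq α β
  exact ⟨congrFun₂ (hC₀ hpq) α β, congrFun₂ (hD₀ hpq) α β⟩

/-- Lemma 2.6(i) of the paper.  With `Φ̄ᵢ, Ψ̄ᵢ` the reductions modulo
`m²` of the partial inflated matrix factorizations of `f` (order `≥ 4`), built from the
commuting tuples encoded by `(R, ρ, a)` and `(R', ρ', a')`: if `C, D` are
`m·2ⁱ × m·2ⁱ` matrices over `k` with `C·Φ̄ᵢ = Φ̄ᵢ'·D` and `D·Ψ̄ᵢ = Ψ̄ᵢ'·C` (i.e. the
products agree modulo `m²` entrywise), then `C` and `D` are `(m × m)`-block lower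
triangular. -/
theorem reduction_hom_block_lower_triangular
    (k : Type) [Field k] (n m : ℕ)
    (R R' : Type) [CommRing R] [Algebra k R] [CommRing R'] [Algebra k R']
    (ρ : R →ₐ[k] Matrix (Fin m) (Fin m) k)
    (ρ' : R' →ₐ[k] Matrix (Fin m) (Fin m) k)
    (a : Fin n → R) (a' : Fin n → R')
    (f : MvPowerSeries (Option (Fin n)) k)
    (hford : f ∈ (Ideal.span (Set.range
        (MvPowerSeries.X : Option (Fin n) → MvPowerSeries (Option (Fin n)) k))) ^ 4)
    (h : MvPowerSeries (Option (Fin n)) R) (g : Fin n → MvPowerSeries (Option (Fin n)) R)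
    (hh : h ∈ (Ideal.span (Set.range
        (MvPowerSeries.X : Option (Fin n) → MvPowerSeries (Option (Fin n)) R))) ^ 2)
    (hg : ∀ i, g i ∈ (Ideal.span (Set.range
        (MvPowerSeries.X : Option (Fin n) → MvPowerSeries (Option (Fin n)) R))) ^ 3)
    (hf : MvPowerSeries.map (σ := Option (Fin n)) (algebraMap k R) f
        = (MvPowerSeries.X none) ^ 2 * h +
          ∑ i : Fin n,
            (MvPowerSeries.X (some i)
              - MvPowerSeries.C (σ := Option (Fin n)) (R := R) (a i) * MvPowerSeries.X none) * g i)
    (h' : MvPowerSeries (Option (Fin n)) R')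
    (g' : Fin n → MvPowerSeries (Option (Fin n)) R')
    (hh' : h' ∈ (Ideal.span (Set.range
        (MvPowerSeries.X : Option (Fin n) → MvPowerSeries (Option (Fin n)) R'))) ^ 2)
    (hg' : ∀ i, g' i ∈ (Ideal.span (Set.range
        (MvPowerSeries.X : Option (Fin n) → MvPowerSeries (Option (Fin n)) R'))) ^ 3)
    (hf' : MvPowerSeries.map (σ := Option (Fin n)) (algebraMap k R') f
        = (MvPowerSeries.X none) ^ 2 * h' +
          ∑ i : Fin n,
            (MvPowerSeries.X (some i)
              - MvPowerSeries.C (σ := Option (Fin n)) (R := R') (a' i) * MvPowerSeries.X none) * g' i)    (i : ℕ) (hi : i ≤ n) :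
    let u : ℕ → MvPowerSeries (Option (Fin n)) R := fun j =>
      match j with
      | 0 => (MvPowerSeries.X none) ^ 2
      | j + 1 => if hj : j < n then
          MvPowerSeries.X (some ⟨j, hj⟩)
            - MvPowerSeries.C (σ := Option (Fin n)) (R := R) (a ⟨j, hj⟩) * MvPowerSeries.X none
        else 0
    let v : ℕ → MvPowerSeries (Option (Fin n)) R := fun j =>
      match j with
      | 0 => h
      | j + 1 => if hj : j < n then g ⟨j, hj⟩ else 0
    let Φ := inflate ρ.toRingHom (knorrerPair u v i).1
    let Ψ := inflate ρ.toRingHom (knorrerPair u v i).2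
    let u' : ℕ → MvPowerSeries (Option (Fin n)) R' := fun j =>
      match j with
      | 0 => (MvPowerSeries.X none) ^ 2
      | j + 1 => if hj : j < n then
          MvPowerSeries.X (some ⟨j, hj⟩)
            - MvPowerSeries.C (σ := Option (Fin n)) (R := R') (a' ⟨j, hj⟩) * MvPowerSeries.X none
        else 0
    let v' : ℕ → MvPowerSeries (Option (Fin n)) R' := fun j =>
      match j with
      | 0 => h'
      | j + 1 => if hj : j < n then g' ⟨j, hj⟩ else 0
    let Φ' := inflate ρ'.toRingHom (knorrerPair u' v' i).1
    let Ψ' := inflate ρ'.toRingHom (knorrerPair u' v' i).2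
    ∀ C D : Matrix ((Fin (2 ^ i)) × Fin m) ((Fin (2 ^ i)) × Fin m) k,
      (∀ p q, (C.map ⇑(MvPowerSeries.C (σ := Option (Fin n)) (R := k)) * Φ) p q
              - (Φ' * D.map ⇑(MvPowerSeries.C (σ := Option (Fin n)) (R := k))) p q
            ∈ (Ideal.span (Set.range
                (MvPowerSeries.X : Option (Fin n) → MvPowerSeries (Option (Fin n)) k))) ^ 2) →
      (∀ p q, (D.map ⇑(MvPowerSeries.C (σ := Option (Fin n)) (R := k)) * Ψ) p q
              - (Ψ' * C.map ⇑(MvPowerSeries.C (σ := Option (Fin n)) (R := k))) p q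
            ∈ (Ideal.span (Set.range
                (MvPowerSeries.X : Option (Fin n) → MvPowerSeries (Option (Fin n)) k))) ^ 2) →
      (∀ p q : Fin (2 ^ i), p < q → ∀ α β : Fin m,
        C (p, α) (q, β) = 0 ∧ D (p, α) (q, β) = 0) :=
  reduction_hom_block_lower_triangular_general k n m R R' ρ ρ' a a' h g hh hg h' g' hh' hg' i hi
end

section
/- Let k be an infinite field. For every finite-dimensional k-algebra Λ there is a representation embedding of the category of finite-dimensional Λ-modules into the category of finite-dimensional k⟨a,b⟩-modules; equivalently, the free algebra on two generators k⟨a,b⟩ is finite-length wild. -/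
open CategoryTheory

/-- A module is *indecomposable* if it is nonzero and its only idempotent endomorphisms
are `0` and the identity. -/
def IsIndecomposableModule (R M : Type) [Ring R] [AddCommGroup M] [Module R M] : Prop :=
  (¬ Subsingleton M) ∧
    ∀ e : M →ₗ[R] M, e ∘ₗ e = e → e = 0 ∨ e = LinearMap.id

/-!
Gelfand–Ponomarev. Choose a `k`-basis `x₁, …, xₘ` of `Λ` and distinct scalars `λ₀, …, λₘ`, and
let `k⟨a,b⟩` act on `M ⊕ Mᵐ` with `a` given by the matrix `aMatrix` and `b` diagonally by the
`λᵢ`. The functor is the Morita equivalence `M ↦ Mᵐ⁺¹` followed by restriction of scalars along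
`k⟨a,b⟩ → Mₘ₊₁(Λ)`, hence exact. It is full: a map commuting with `b` preserves its eigenspaces,
i.e. is diagonal; commuting with `a` forces all diagonal blocks to be one map, which then commutes
with each `xₜ`, so is `Λ`-linear. A fully faithful additive functor preserves indecomposability
and reflects isomorphism.
-/

open Limits Matrix.Module

theorem IsIndecomposableModule.map_of_fullyFaithful {R S : Type} [Ring R] [Ring S]
    {F : ModuleCat.{0} R ⥤ ModuleCat.{0} S} [F.PreservesZeroMorphisms] (hF : F.FullyFaithful)
    {M : ModuleCat.{0} R} (hM : IsIndecomposableModule R M) :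
    IsIndecomposableModule S (F.obj M) := by
  obtain ⟨hM_nontrivial, hM_idem⟩ := hM
  refine ⟨fun hFM => hM_nontrivial ?_, fun e he => ?_⟩
  · have hid : 𝟙 M = 0 := hF.map_injective (by ext; exact Subsingleton.elim _ _)
    exact subsingleton_of_forall_eq 0 fun u => congr($(hid).hom u)
  · set f := hF.preimage (ModuleCat.ofHom e)
    have hf : f ≫ f = f :=
      hF.map_injective (by rw [F.map_comp, hF.map_preimage, ← ModuleCat.ofHom_comp, he])
    have he_map : e = (F.map f).hom := by rw [hF.map_preimage]; rfl
    rcases hM_idem f.hom congr($(hf).hom) with h | h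
    · left
      rw [he_map, show f = 0 from ModuleCat.hom_ext h, F.map_zero]
      rfl
    · right
      rw [he_map, show f = 𝟙 M from ModuleCat.hom_ext h, F.map_id]
      rfl

theorem algebraMap_smul_eq_zero_iff {k R N : Type*} [Field k] [Ring R] [Algebra k R]
    [AddCommGroup N] [Module R N] {c : k} (hc : c ≠ 0) {w : N} :
    algebraMap k R c • w = 0 ↔ w = 0 :=
  ((IsUnit.mk0 c hc).map (algebraMap k R)).smul_eq_zero

theorem AddMonoidHom.map_smul_of_span_eq_top {k R M N : Type*} [CommSemiring k] [Semiring R]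
    [Algebra k R] [AddCommMonoid M] [Module R M] [AddCommMonoid N] [Module R N] (f : M →+ N)
    {s : Set R} (hs : Submodule.span k s = ⊤)
    (hf_algebraMap : ∀ (c : k) u, f (algebraMap k R c • u) = algebraMap k R c • f u)
    (hf_gen : ∀ r ∈ s, ∀ u, f (r • u) = r • f u) (r : R) (u : M) :
    f (r • u) = r • f u := by
  have hr : r ∈ Submodule.span k s := hs ▸ Submodule.mem_top
  induction hr using Submodule.span_induction generalizing u with
  | mem r hr => exact hf_gen r hr u
  | zero => simp
  | add r r' _ _ hr hr' => rw [add_smul, add_smul, map_add, hr, hr']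
  | smul c r _ hr => rw [Algebra.smul_def, mul_smul, mul_smul, hf_algebraMap, hr]

namespace Matrix.Module

variable {ι R M : Type*} [Ring R] [Fintype ι] [DecidableEq ι] [AddCommGroup M] [Module R M]

theorem diagonal_smul_apply (d : ι → R) (v : ι → M) (i : ι) :
    (Matrix.diagonal d • v) i = d i • v i := by
  simp [Matrix.diagonal_apply, ite_smul]

theorem algebraMap_smul {k : Type*} [CommSemiring k] [Algebra k R] (c : k) (v : ι → M) :
    algebraMap k (Matrix ι ι R) c • v = algebraMap k R c • v := by
  rw [Matrix.algebraMap_eq_diagonal]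
  exact diagonal_const_smul _ v

end Matrix.Module

theorem AddMonoidHom.exists_pi_map_of_commute_diagonal {k R ι M N : Type*} [Field k] [Ring R]
    [Algebra k R] [Fintype ι] [DecidableEq ι] [AddCommGroup M] [Module R M] [AddCommGroup N]
    [Module R N] {lam : ι → k} (hlam : Function.Injective lam) (g : (ι → M) →+ (ι → N))
    (h_algebraMap : ∀ (c : k) v, g (algebraMap k R c • v) = algebraMap k R c • g v)
    (h_diagonal : ∀ v, g (Matrix.diagonal (algebraMap k R ∘ lam) • v) =
      Matrix.diagonal (algebraMap k R ∘ lam) • g v) :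
    ∃ φ : ι → M →+ N, ∀ v i, g v i = φ i (v i) := by
  have h_offDiag : ∀ j (u : M) i, i ≠ j → g (Pi.single j u) i = 0 := by
    intro j u i hij
    have h_eigen : Matrix.diagonal (algebraMap k R ∘ lam) • (Pi.single j u : ι → M) =
        algebraMap k R (lam j) • Pi.single j u := by
      ext i'
      rw [diagonal_smul_apply]
      rcases eq_or_ne i' j with rfl | hi' <;> simp [*]
    have h := congrFun ((h_algebraMap _ _).symm.trans ((congrArg g h_eigen).symm.trans
      (h_diagonal _))) i
    rw [Pi.smul_apply, diagonal_smul_apply, Function.comp_apply] at h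
    rw [← algebraMap_smul_eq_zero_iff (R := R) (sub_ne_zero.2 (hlam.ne hij.symm)),
      map_sub, sub_smul, h, sub_self]
  refine ⟨fun i => (Pi.evalAddMonoidHom _ i).comp (g.comp (AddMonoidHom.single _ i)),
    fun v i => ?_⟩
  conv_lhs => rw [← Finset.univ_sum_single v, map_sum, Finset.sum_apply]
  exact Finset.sum_eq_single i (fun j _ hji => h_offDiag j (v j) i hji.symm) (by simp)

namespace ModuleCat

variable {Λ S ι : Type} [Ring Λ] [Ring S] [Fintype ι] [DecidableEq ι]

noncomputable def matrixRestrictScalars (ψ : S →+* Matrix ι ι Λ) :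
    ModuleCat.{0} Λ ⥤ ModuleCat.{0} S :=
  toMatrixModCat Λ ι ⋙ restrictScalars ψ

variable (ψ : S →+* Matrix ι ι Λ)

instance [Nonempty ι] : (toMatrixModCat Λ ι).IsEquivalence :=
  (matrixEquivalence Λ (Classical.arbitrary ι)).isEquivalence_functor

instance : PreservesFiniteLimits (restrictScalars.{0} ψ) := ⟨fun _ _ _ => ⟨inferInstance⟩⟩

variable [Nonempty ι]

instance : PreservesFiniteLimits (matrixRestrictScalars ψ) :=
  comp_preservesFiniteLimits _ _

instance : PreservesFiniteColimits (matrixRestrictScalars ψ) :=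
  comp_preservesFiniteColimits _ _

instance : (matrixRestrictScalars ψ).Faithful :=
  Functor.Faithful.comp _ _

instance : (matrixRestrictScalars ψ).PreservesZeroMorphisms :=
  inferInstanceAs (toMatrixModCat Λ ι ⋙ restrictScalars ψ).PreservesZeroMorphisms

end ModuleCat

theorem ModuleCat.finiteDimensional_matrixRestrictScalars_obj {k Λ S ι : Type} [Field k] [Ring Λ]
    [Algebra k Λ] [Ring S] [Algebra k S] [Fintype ι] [DecidableEq ι] (ψ : S →ₐ[k] Matrix ι ι Λ)
    (M : ModuleCat.{0} Λ)
    (hM : @FiniteDimensional k (RestrictScalars k Λ M) _ _ (RestrictScalars.module k Λ M)) :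
    @FiniteDimensional k (RestrictScalars k S ((matrixRestrictScalars ψ.toRingHom).obj M)) _ _
      (RestrictScalars.module k S ((matrixRestrictScalars ψ.toRingHom).obj M)) := by
  let _ : Module k (RestrictScalars k Λ M) := RestrictScalars.module k Λ M
  let _ : Module k (RestrictScalars k S ((matrixRestrictScalars ψ.toRingHom).obj M)) :=
    RestrictScalars.module k S _
  have hsmul (c : k) (v : ι → M) : ψ (algebraMap k S c) • v = algebraMap k Λ c • v := by
    rw [AlgHom.commutes, Matrix.Module.algebraMap_smul]
  let e : RestrictScalars k S ((matrixRestrictScalars ψ.toRingHom).obj M) ≃ₗ[k]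
      (ι → RestrictScalars k Λ M) :=
    { AddEquiv.refl _ with map_smul' := hsmul }
  have : Module.Finite k (RestrictScalars k Λ M) := hM
  -- `exact` would unify with the goal first and then fail to synthesize its `Module k` instance
  have := Module.Finite.equiv e.symm
  exact this

namespace GelfandPonomarev

variable {k Λ : Type} [Field k] [Ring Λ] [Algebra k Λ] {m : ℕ}

/-- Indexing `M ⊕ Mᵐ` by `Option (Fin m)`, with `none` the first summand, `a` acts by
`(u, v) ↦ (∑ₜ vₜ, (xₜ • u)ₜ)`. -/
def aMatrix (x : Fin m → Λ) : Matrix (Option (Fin m)) (Option (Fin m)) Λ :=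
  Matrix.of fun
    | none, some _ => 1
    | some t, none => x t
    | _, _ => 0

def bMatrix (lam : Option (Fin m) → k) : Matrix (Option (Fin m)) (Option (Fin m)) Λ :=
  Matrix.diagonal (algebraMap k Λ ∘ lam)

noncomputable def representation (x : Fin m → Λ) (lam : Option (Fin m) → k) :
    FreeAlgebra k (Fin 2) →ₐ[k] Matrix (Option (Fin m)) (Option (Fin m)) Λ :=
  FreeAlgebra.lift k ![aMatrix x, bMatrix lam]

noncomputable abbrev functor (x : Fin m → Λ) (lam : Option (Fin m) → k) :
    ModuleCat.{0} Λ ⥤ ModuleCat.{0} (FreeAlgebra k (Fin 2)) :=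
  ModuleCat.matrixRestrictScalars (representation x lam).toRingHom

variable {M : Type} [AddCommGroup M] [Module Λ M] (x : Fin m → Λ)

theorem aMatrix_smul_none (v : Option (Fin m) → M) : (aMatrix x • v) none = ∑ t, v (some t) := by
  simp [Fintype.sum_option, aMatrix]

theorem aMatrix_smul_some (v : Option (Fin m) → M) (t : Fin m) :
    (aMatrix x • v) (some t) = x t • v none := by
  simp [Fintype.sum_option, aMatrix]

theorem exists_linearMap_of_commute_representation (hx : Submodule.span k (Set.range x) = ⊤)
    {lam : Option (Fin m) → k} (hlam : Function.Injective lam) {N : Type} [AddCommGroup N]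
    [Module Λ N] (g : (Option (Fin m) → M) →+ (Option (Fin m) → N))
    (hg : ∀ s v, g (representation x lam s • v) = representation x lam s • g v) :
    ∃ f : M →ₗ[Λ] N, ∀ v i, g v i = f (v i) := by
  have h_algebraMap (c : k) (v : Option (Fin m) → M) :
      g (algebraMap k Λ c • v) = algebraMap k Λ c • g v := by
    simpa only [AlgHom.commutes, Matrix.Module.algebraMap_smul] using hg (algebraMap k _ c) v
  have h_a (v : Option (Fin m) → M) : g (aMatrix x • v) = aMatrix x • g v := by
    simpa [representation] using hg (FreeAlgebra.ι k 0) v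
  have h_b (v : Option (Fin m) → M) :
      g (bMatrix (Λ := Λ) lam • v) = bMatrix (Λ := Λ) lam • g v := by
    simpa [representation] using hg (FreeAlgebra.ι k 1) v
  obtain ⟨φ, hφ⟩ := g.exists_pi_map_of_commute_diagonal hlam h_algebraMap h_b
  have h_blocks (t : Fin m) (u : M) : φ (some t) u = φ none u := by
    have := congrFun (h_a (Pi.single (some t) u)) none
    rw [hφ, aMatrix_smul_none, aMatrix_smul_none] at this
    simpa [hφ, Pi.single_apply, apply_ite] using this.symm
  have h_gen (t : Fin m) (u : M) : φ none (x t • u) = x t • φ none u := by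
    have := congrFun (h_a (Pi.single none u)) (some t)
    rw [hφ, aMatrix_smul_some, aMatrix_smul_some, hφ, h_blocks] at this
    simpa using this
  have h_scalar (c : k) (u : M) : φ none (algebraMap k Λ c • u) = algebraMap k Λ c • φ none u := by
    simpa [hφ] using congrFun (h_algebraMap c fun _ => u) none
  let f : M →ₗ[Λ] N :=
    { φ none with
      map_smul' := (φ none).map_smul_of_span_eq_top hx h_scalar <| by
        rintro _ ⟨t, rfl⟩
        exact h_gen t }
  refine ⟨f, fun v i => ?_⟩
  cases i with
  | none => exact hφ v none
  | some t => exact (hφ v (some t)).trans (h_blocks t _)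

theorem functor_full (hx : Submodule.span k (Set.range x) = ⊤) {lam : Option (Fin m) → k}
    (hlam : Function.Injective lam) : (functor x lam).Full where
  map_surjective {M N} g := by
    obtain ⟨f, hf⟩ := exists_linearMap_of_commute_representation x hx hlam
      g.hom.toAddMonoidHom g.hom.map_smul
    exact ⟨ModuleCat.ofHom f, by ext v; funext i; exact (hf v i).symm⟩

end GelfandPonomarev

/-- Example 2.3; Gelfand–Ponomarev.  Let `k` be an infinite field.
For every finite-dimensional `k`-algebra `Λ` there is a representation embedding of the
finite-dimensional `Λ`-modules into the finite-dimensional modules over the free algebra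
`k⟨a,b⟩`: an exact functor (preserving finite limits and colimits) sending
finite-dimensional modules to finite-dimensional ones, preserving indecomposability and
reflecting isomorphism.  Equivalently, `k⟨a,b⟩` is finite-length wild. -/
theorem free_algebra_two_generators_is_wild
    (k : Type) [Field k] [Infinite k]
    (Λ : Type) [Ring Λ] [Algebra k Λ] [FiniteDimensional k Λ] :
    ∃ F : ModuleCat.{0} Λ ⥤ ModuleCat.{0} (FreeAlgebra k (Fin 2)),
      Nonempty (Limits.PreservesFiniteLimits F) ∧
      Nonempty (Limits.PreservesFiniteColimits F) ∧
      (∀ M : ModuleCat.{0} Λ, @FiniteDimensional k (RestrictScalars k Λ M) _ _ (RestrictScalars.module k Λ M) →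
        @FiniteDimensional k (RestrictScalars k (FreeAlgebra k (Fin 2)) (F.obj M)) _ _
          (RestrictScalars.module k (FreeAlgebra k (Fin 2)) (F.obj M))) ∧
      (∀ M : ModuleCat.{0} Λ, @FiniteDimensional k (RestrictScalars k Λ M) _ _ (RestrictScalars.module k Λ M) →
        IsIndecomposableModule Λ M →
        IsIndecomposableModule (FreeAlgebra k (Fin 2)) (F.obj M)) ∧
      (∀ M N : ModuleCat.{0} Λ,
        @FiniteDimensional k (RestrictScalars k Λ M) _ _ (RestrictScalars.module k Λ M) →
        @FiniteDimensional k (RestrictScalars k Λ N) _ _ (RestrictScalars.module k Λ N) →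
        (Nonempty (F.obj M ≅ F.obj N) ↔ Nonempty (M ≅ N))) := by
  let x := Module.finBasis k Λ
  let lam : Option (Fin (Module.finrank k Λ)) → k := Infinite.natEmbedding k ∘ Encodable.encode
  have hlam : Function.Injective lam :=
    (Infinite.natEmbedding k).injective.comp Encodable.encode_injective
  have := GelfandPonomarev.functor_full x x.span_eq hlam
  let hF := Functor.FullyFaithful.ofFullyFaithful (GelfandPonomarev.functor x lam)
  exact ⟨GelfandPonomarev.functor x lam, ⟨inferInstance⟩, ⟨inferInstance⟩,
    fun M hM => ModuleCat.finiteDimensional_matrixRestrictScalars_obj _ M hM,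
    fun _ _ hM => hM.map_of_fullyFaithful hF,
    fun _ _ _ _ => hF.isoEquiv.nonempty_congr.symm⟩
end
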